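/- arXiv:1403.1182 — 7 statements merged into one kernel-verified Lean document; each statement's English description precedes it below -/
import Mathlib

section
/- For every finite simple graph G with at least one edge, reg(G) ≤ Δ(G) + 1, where Δ(G) is the maximum degree of G. -/
open SimpleGraph

variable {V : Type*}

/-- The number of edges of the edge set `F` incident with the vertex `v`. -/
noncomputable def edgeDeg (F : Set (Sym2 V)) (v : V) : ℕ := {e ∈ F | v ∈ e}.ncard

/-- The subgraph induced by the edge set `F` (on the vertices incident with edges of `F`)
is `r`-regular: every vertex incident with an edge of `F` lies on exactly `r` edges of `F`. -/
def IsRegularEdgeSet (F : Set (Sym2 V)) (r : ℕ) : Prop :=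
  ∀ v : V, (∃ e ∈ F, v ∈ e) → edgeDeg F v = r

/-- `P` is a partition of the edge set of `G` into `t` nonempty parts, each of which
induces a regular subgraph. -/
def IsRegularPartition (G : SimpleGraph V) {t : ℕ} (P : Fin t → Set (Sym2 V)) : Prop :=
  (∀ i, (P i).Nonempty) ∧ (∀ i j, i ≠ j → Disjoint (P i) (P j)) ∧
    (⋃ i, P i) = G.edgeSet ∧ ∀ i, ∃ r, IsRegularEdgeSet (P i) r

/-- The regular number of `G`: the minimum number of parts in a partition of the edge set of `G`
into nonempty subsets each of which induces a regular subgraph. -/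
noncomputable def regNum (G : SimpleGraph V) : ℕ :=
  sInf {t | ∃ P : Fin t → Set (Sym2 V), IsRegularPartition G P}

/-- `C` is a proper edge coloring of `G` with `n` colors: edges sharing a vertex get
distinct colors. -/
def IsProperEdgeColoring (G : SimpleGraph V) {n : ℕ} (C : Sym2 V → Fin n) : Prop :=
  ∀ e₁ ∈ G.edgeSet, ∀ e₂ ∈ G.edgeSet, e₁ ≠ e₂ → (∃ x, x ∈ e₁ ∧ x ∈ e₂) → C e₁ ≠ C e₂

/-- The edge chromatic number of `G`: the minimum number of colors of a proper edge coloring. -/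
noncomputable def edgeChromNum (G : SimpleGraph V) : ℕ :=
  sInf {n | ∃ C : Sym2 V → Fin n, IsProperEdgeColoring G C}

/-!
The color classes of a proper edge coloring are matchings, hence 1-regular, so `reg(G)` is at
most the number of colors, and Vizing's theorem supplies `Δ(G) + 1` colors.

Vizing's theorem is proved by coloring the edges one at a time. For an uncolored edge `x y₀`
take a maximal fan `y₀, …, y_k` at `x`, a color `α` missing at `x` and `β` missing at `y_k`.
If `β` is also missing at `x`, shifting each color of the fan one step down frees `β` for the
last edge. Otherwise `β` colors some fan edge `x y_{i+1}`, so `β` is missing at `y_i`, and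
swapping `α` and `β` on the `α/β`-chain through `x` makes `β` missing at `x`. This chain is a
path ending at `x`, so it does not reach both `y_i` and `y_k`: if it misses `y_i` the fan
`y₀, …, y_i` can be rotated, and otherwise the whole fan can.
-/

open Finset

namespace SimpleGraph

variable {W : Type*} [Fintype W] {H : SimpleGraph W} [DecidableRel H.Adj]

lemma Connected.card_filter_degree_le_one_le_two (hH : H.Connected) (hdeg : ∀ v, H.degree v ≤ 2) :
    #{v | H.degree v ≤ 1} ≤ 2 := by
  have hE : Fintype.card W ≤ #H.edgeFinset + 1 := by
    simpa only [Nat.card_eq_fintype_card, card_edgeSet] using hH.card_vert_le_card_edgeSet_add_one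
  have hsum : ∑ v, (H.degree v + if H.degree v ≤ 1 then 1 else 0) ≤ ∑ _v : W, 2 :=
    sum_le_sum fun v _ => by split_ifs <;> grind
  rw [sum_add_distrib, sum_degrees_eq_twice_card_edges, ← card_filter] at hsum
  simp only [sum_const, card_univ, smul_eq_mul] at hsum
  omega

lemma card_le_two_of_reachable_of_degree_le_one (hdeg : ∀ v, H.degree v ≤ 2) (x : W)
    {T : Finset W} (hT : ∀ v ∈ T, H.Reachable x v ∧ H.degree v ≤ 1) : #T ≤ 2 := by
  classical
  set S := (H.connectedComponentMk x).supp
  have hconn : (H.induce S).Connected := (H.connectedComponentMk x).connected_toSimpleGraph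
  have hdegS (v : S) : (H.induce S).degree v ≤ H.degree v := (Copy.induce H S).degree_le v
  have hmem (v) (hv : v ∈ T) : v ∈ S := ConnectedComponent.sound (hT v hv).1.symm
  calc #T = #(T.subtype (· ∈ S)) := by rw [card_subtype, filter_true_of_mem hmem]
    _ ≤ #{v : S | (H.induce S).degree v ≤ 1} := card_le_card fun v hv => ?_
    _ ≤ 2 := hconn.card_filter_degree_le_one_le_two fun v => (hdegS v).trans (hdeg v)
  rw [mem_subtype] at hv
  exact mem_filter.2 ⟨mem_univ _, (hdegS v).trans (hT v hv).2⟩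

end SimpleGraph

namespace EdgeColoring

variable {κ : Type*}

/-- Only the values of `c` on `F` matter: the pair `(F, c)` is a partial edge coloring. -/
def ProperOn (F : Set (Sym2 V)) (c : Sym2 V → κ) : Prop :=
  ∀ e₁ ∈ F, ∀ e₂ ∈ F, e₁ ≠ e₂ → (∃ x, x ∈ e₁ ∧ x ∈ e₂) → c e₁ ≠ c e₂

def IsMissing (F : Set (Sym2 V)) (c : Sym2 V → κ) (v : V) (γ : κ) : Prop :=
  ∀ e ∈ F, v ∈ e → c e ≠ γ

variable {F : Set (Sym2 V)} {c : Sym2 V → κ}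

lemma ProperOn.mono (hc : ProperOn F c) {F' : Set (Sym2 V)} (h : F' ⊆ F) : ProperOn F' c :=
  fun e₁ h₁ e₂ h₂ => hc e₁ (h h₁) e₂ (h h₂)

section Update

variable [DecidableEq V]

lemma ProperOn.update_insert (hc : ProperOn F c) {e : Sym2 V} {γ : κ} (he : e ∉ F)
    (hγ : ∀ v ∈ e, IsMissing F c v γ) : ProperOn (insert e F) (Function.update c e γ) := by
  have hne {f} (hf : f ∈ F) : f ≠ e := fun h => he (h ▸ hf)
  rintro e₁ (rfl | h₁) e₂ (rfl | h₂) hne₁₂ ⟨v, hv₁, hv₂⟩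
  · exact absurd rfl hne₁₂
  · rw [Function.update_self, Function.update_of_ne (hne h₂)]
    exact (hγ v hv₁ e₂ h₂ hv₂).symm
  · rw [Function.update_self, Function.update_of_ne (hne h₁)]
    exact hγ v hv₂ e₁ h₁ hv₁
  · rw [Function.update_of_ne (hne h₁), Function.update_of_ne (hne h₂)]
    exact hc e₁ h₁ e₂ h₂ hne₁₂ ⟨v, hv₁, hv₂⟩

lemma IsMissing.update_insert {v : V} {γ δ : κ} {e : Sym2 V} {F' : Set (Sym2 V)}
    (h : IsMissing F c v γ) (hF' : F' ⊆ F) (hδ : v ∈ e → δ ≠ γ) :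
    IsMissing (insert e F') (Function.update c e δ) v γ := by
  intro f hf hvf
  by_cases hfe : f = e
  · subst hfe
    rw [Function.update_self]
    exact hδ hvf
  · rw [Function.update_of_ne hfe]
    exact h f (hF' (hf.resolve_left hfe)) hvf

lemma ProperOn.shift (hc : ProperOn F c) {x y₀ y₁ : V} (h₀ : s(x, y₀) ∉ F) (h₁ : s(x, y₁) ∈ F)
    (hmiss : IsMissing F c y₀ (c s(x, y₁))) :
    ProperOn (insert s(x, y₀) (F \ {s(x, y₁)})) (Function.update c s(x, y₀) (c s(x, y₁))) := by
  refine (hc.mono Set.sdiff_subset).update_insert (fun h => h₀ h.1) fun v hv => ?_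
  rcases Sym2.mem_iff.1 hv with rfl | rfl
  · exact fun f hf hvf => hc f hf.1 _ h₁ hf.2 ⟨v, hvf, Sym2.mem_mk_left _ _⟩
  · exact fun f hf => hmiss f hf.1

end Update

/-- Vizing's fan at `x`; only `y 0, …, y k` matter. -/
structure IsFan (F : Set (Sym2 V)) (c : Sym2 V → κ) (x : V) (y : ℕ → V) (k : ℕ) : Prop where
  injOn : Set.InjOn y (Set.Iic k)
  ne_center : ∀ i ≤ k, y i ≠ x
  not_mem : s(x, y 0) ∉ F
  mem : ∀ i < k, s(x, y (i + 1)) ∈ F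
  isMissing : ∀ i < k, IsMissing F c (y i) (c s(x, y (i + 1)))

namespace IsFan

variable {x : V} {y : ℕ → V} {k : ℕ}

lemma mono (hf : IsFan F c x y k) {j : ℕ} (hj : j ≤ k) : IsFan F c x y j where
  injOn := hf.injOn.mono (Set.Iic_subset_Iic.2 hj)
  ne_center i hi := hf.ne_center i (hi.trans hj)
  not_mem := hf.not_mem
  mem i hi := hf.mem i (hi.trans_le hj)
  isMissing i hi := hf.isMissing i (hi.trans_le hj)

lemma of_isMissing (hf : IsFan F c x y k) {c' : Sym2 V → κ}
    (h : ∀ i < k, IsMissing F c' (y i) (c' s(x, y (i + 1)))) : IsFan F c' x y k :=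
  ⟨hf.injOn, hf.ne_center, hf.not_mem, hf.mem, h⟩

lemma apply_notMem (hf : IsFan F c x y k) {i : ℕ} (h0 : 0 < i) (hi : i ≤ k) :
    y i ∉ s(x, y 0) := by
  rw [Sym2.mem_iff, not_or]
  exact ⟨hf.ne_center i hi, fun h => h0.ne' (hf.injOn hi k.zero_le h)⟩

lemma extend (hf : IsFan F c x y k) {w : V} (hw : s(x, w) ∈ F) (hwx : w ≠ x)
    (hwy : ∀ i ≤ k, y i ≠ w) (hmiss : IsMissing F c (y k) (c s(x, w))) :
    IsFan F c x (Function.update y (k + 1) w) (k + 1) := by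
  have hy (i) (hi : i ≤ k) : Function.update y (k + 1) w i = y i :=
    Function.update_of_ne (by omega) _ _
  have hk : Function.update y (k + 1) w (k + 1) = w := Function.update_self _ _ _
  constructor
  · intro i hi j hj hij
    rcases Nat.le_succ_iff.1 hi with hi | rfl <;> rcases Nat.le_succ_iff.1 hj with hj | rfl
    · rw [hy i hi, hy j hj] at hij
      exact hf.injOn hi hj hij
    · exact absurd (hk ▸ hy i hi ▸ hij) (hwy i hi)
    · exact absurd (hk ▸ hy j hj ▸ hij).symm (hwy j hj)
    · rfl
  · intro i hi
    rcases Nat.le_succ_iff.1 hi with hi | rfl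
    · rw [hy i hi]; exact hf.ne_center i hi
    · rwa [hk]
  · exact hy 0 k.zero_le ▸ hf.not_mem
  · intro i hi
    rcases Nat.lt_succ_iff_lt_or_eq.1 hi with hi | rfl
    · rw [hy (i + 1) hi]; exact hf.mem i hi
    · rwa [hk]
  · intro i hi
    rcases Nat.lt_succ_iff_lt_or_eq.1 hi with hi | rfl
    · rw [hy (i + 1) hi, hy i hi.le]; exact hf.isMissing i hi
    · rwa [hk, hy i le_rfl]

lemma shift [DecidableEq V] (hf : IsFan F c x y (k + 1)) :
    IsFan (insert s(x, y 0) (F \ {s(x, y 1)})) (Function.update c s(x, y 0) (c s(x, y 1)))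
      x (fun i => y (i + 1)) k := by
  have hne (i) (hi : i ≤ k) : s(x, y (i + 1)) ≠ s(x, y 0) :=
    fun h => hf.apply_notMem i.succ_pos (by omega) (h ▸ Sym2.mem_mk_right _ _)
  refine ⟨fun i hi j hj h => ?_, fun i hi => hf.ne_center (i + 1) (by omega), ?_,
    fun i hi => Or.inr ⟨hf.mem (i + 1) (by omega), fun h => ?_⟩, fun i hi => ?_⟩
  · have := hf.injOn (Nat.succ_le_succ hi) (Nat.succ_le_succ hj) h
    omega
  · rintro (h | h)
    exacts [hne 0 k.zero_le h, h.2 rfl]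
  · have := hf.injOn (show i + 2 ≤ k + 1 by omega) (show 1 ≤ k + 1 by omega)
      (Sym2.congr_right.1 h)
    omega
  · rw [Function.update_of_ne (hne (i + 1) hi)]
    exact (hf.isMissing (i + 1) (by omega)).update_insert Set.sdiff_subset
      fun h => hf.apply_notMem i.succ_pos (by omega) h |>.elim

/-- Shift the color of each `s(x, y (i + 1))` to `s(x, y i)` and give `s(x, y k)` the color `d`. -/
theorem exists_properOn_insert (hc : ProperOn F c) (hf : IsFan F c x y k) {d : κ}
    (hx : IsMissing F c x d) (hk : IsMissing F c (y k) d) :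
    ∃ c' : Sym2 V → κ, ProperOn (insert s(x, y 0) F) c' := by
  classical
  induction k generalizing F c y with
  | zero =>
    refine ⟨_, hc.update_insert (γ := d) hf.not_mem fun v hv => ?_⟩
    rcases Sym2.mem_iff.1 hv with rfl | rfl
    exacts [hx, hk]
  | succ k ih =>
    have h₁ : s(x, y 1) ∈ F := hf.mem 0 k.succ_pos
    obtain ⟨c', hc'⟩ := ih (hc.shift hf.not_mem h₁ (hf.isMissing 0 k.succ_pos)) hf.shift
      (hx.update_insert Set.sdiff_subset fun _ => hx _ h₁ (Sym2.mem_mk_left _ _))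
      (hk.update_insert Set.sdiff_subset fun h => (hf.apply_notMem k.succ_pos le_rfl h).elim)
    refine ⟨c', ?_⟩
    rwa [Set.insert_comm, Set.insert_sdiff_singleton, Set.insert_eq_of_mem h₁] at hc'

end IsFan

def kempeGraph (F : Set (Sym2 V)) (c : Sym2 V → κ) (α β : κ) : SimpleGraph V :=
  fromEdgeSet {e | e ∈ F ∧ (c e = α ∨ c e = β)}

section KempeGraph

variable {α β : κ}

lemma degree_kempeGraph_le [Fintype V] [DecidableRel (kempeGraph F c α β).Adj]
    (hc : ProperOn F c) (v : V) (T : Finset κ)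
    (hT : ∀ e ∈ F, v ∈ e → (c e = α ∨ c e = β) → c e ∈ T) :
    (kempeGraph F c α β).degree v ≤ #T := by
  rw [← card_neighborFinset_eq_degree]
  refine card_le_card_of_injOn (fun w => c s(v, w)) (fun w hw => ?_) fun w₁ hw₁ w₂ hw₂ h => ?_
  · rw [mem_coe, mem_neighborFinset, kempeGraph, fromEdgeSet_adj] at hw
    exact hT _ hw.1.1 (Sym2.mem_mk_left _ _) hw.1.2
  · rw [mem_coe, mem_neighborFinset, kempeGraph, fromEdgeSet_adj] at hw₁ hw₂
    by_contra hne
    exact hc _ hw₁.1.1 _ hw₂.1.1 (mt Sym2.congr_right.1 hne)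
      ⟨v, Sym2.mem_mk_left _ _, Sym2.mem_mk_left _ _⟩ h

/-- The `α`/`β`-graph has maximum degree `2`, so a component of it has at most two vertices of
degree `≤ 1`, and these include the vertices at which `α` or `β` is missing. -/
lemma kempeGraph_not_reachable_of_isMissing [Fintype V] (hc : ProperOn F c) {x p q : V}
    (hxp : x ≠ p) (hxq : x ≠ q) (hpq : p ≠ q) (hx : IsMissing F c x α)
    (hp : IsMissing F c p β) (hq : IsMissing F c q β)
    (hrp : (kempeGraph F c α β).Reachable x p) : ¬ (kempeGraph F c α β).Reachable x q := by
  classical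
  intro hrq
  have hdegα (v) (hv : IsMissing F c v α) : (kempeGraph F c α β).degree v ≤ 1 :=
    degree_kempeGraph_le hc v {β} fun e he hve h => by simpa [hv e he hve] using h
  have hdegβ (v) (hv : IsMissing F c v β) : (kempeGraph F c α β).degree v ≤ 1 :=
    degree_kempeGraph_le hc v {α} fun e he hve h => by simpa [hv e he hve] using h
  have hdeg (v) : (kempeGraph F c α β).degree v ≤ 2 :=
    (degree_kempeGraph_le hc v {α, β} fun e _ _ h => by rcases h with h | h <;> simp [h]).trans
      card_le_two
  have := card_le_two_of_reachable_of_degree_le_one hdeg x (T := {x, p, q}) <| by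
    simp only [mem_insert, mem_singleton, forall_eq_or_imp, forall_eq]
    exact ⟨⟨.rfl, hdegα x hx⟩, ⟨hrp, hdegβ p hp⟩, hrq, hdegβ q hq⟩
  rw [card_eq_three.2 ⟨x, p, q, hxp, hxq, hpq, rfl⟩] at this
  omega

lemma kempeGraph_reachable_of_mem {x : V} {e : Sym2 V} (he : e ∈ F) (hce : c e = α ∨ c e = β)
    {u v : V} (hu : u ∈ e) (hv : v ∈ e) (hxu : (kempeGraph F c α β).Reachable x u) :
    (kempeGraph F c α β).Reachable x v := by
  obtain rfl | huv := eq_or_ne u v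
  · exact hxu
  · obtain rfl := (Sym2.mem_and_mem_iff huv).1 ⟨hu, hv⟩
    have hadj : (kempeGraph F c α β).Adj u v := (fromEdgeSet_adj _).2 ⟨⟨he, hce⟩, huv⟩
    exact hxu.trans hadj.reachable

end KempeGraph

section KempeSwap

variable [DecidableEq κ] {α β : κ}

open Classical in
noncomputable def kempeSwap (F : Set (Sym2 V)) (c : Sym2 V → κ) (α β : κ) (x : V) :
    Sym2 V → κ :=
  fun e => if ∀ u ∈ e, (kempeGraph F c α β).Reachable x u then Equiv.swap α β (c e) else c e

variable {x : V}

lemma kempeSwap_apply_of_reachable {e : Sym2 V} (he : e ∈ F) {u : V} (hu : u ∈ e)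
    (hxu : (kempeGraph F c α β).Reachable x u) :
    kempeSwap F c α β x e = Equiv.swap α β (c e) := by
  by_cases hall : ∀ v ∈ e, (kempeGraph F c α β).Reachable x v
  · rw [kempeSwap, if_pos hall]
  · rw [kempeSwap, if_neg hall]
    push Not at hall
    obtain ⟨v, hv, hxv⟩ := hall
    have hce : c e ≠ α ∧ c e ≠ β := by
      constructor <;> intro h <;> exact hxv (kempeGraph_reachable_of_mem he (by tauto) hu hv hxu)
    exact (Equiv.swap_apply_of_ne_of_ne hce.1 hce.2).symm

lemma kempeSwap_apply_of_not_reachable {e : Sym2 V} {u : V} (hu : u ∈ e)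
    (hxu : ¬ (kempeGraph F c α β).Reachable x u) : kempeSwap F c α β x e = c e :=
  if_neg fun h => hxu (h u hu)

lemma kempeSwap_apply_of_ne {e : Sym2 V} (hα : c e ≠ α) (hβ : c e ≠ β) :
    kempeSwap F c α β x e = c e := by
  unfold kempeSwap
  split_ifs
  exacts [Equiv.swap_apply_of_ne_of_ne hα hβ, rfl]

lemma ProperOn.kempeSwap (hc : ProperOn F c) : ProperOn F (kempeSwap F c α β x) := by
  intro e₁ h₁ e₂ h₂ hne ⟨v, hv₁, hv₂⟩
  by_cases hxv : (kempeGraph F c α β).Reachable x v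
  · rw [kempeSwap_apply_of_reachable h₁ hv₁ hxv, kempeSwap_apply_of_reachable h₂ hv₂ hxv]
    exact (Equiv.swap α β).injective.ne (hc e₁ h₁ e₂ h₂ hne ⟨v, hv₁, hv₂⟩)
  · rw [kempeSwap_apply_of_not_reachable hv₁ hxv, kempeSwap_apply_of_not_reachable hv₂ hxv]
    exact hc e₁ h₁ e₂ h₂ hne ⟨v, hv₁, hv₂⟩

lemma isMissing_kempeSwap_iff_of_reachable {v : V} (hxv : (kempeGraph F c α β).Reachable x v)
    {γ : κ} : IsMissing F (kempeSwap F c α β x) v γ ↔ IsMissing F c v (Equiv.swap α β γ) := by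
  refine forall₂_congr fun e he => forall_congr' fun hv => ?_
  rw [kempeSwap_apply_of_reachable he hv hxv, Ne, Ne, Equiv.swap_apply_eq_iff]

lemma isMissing_kempeSwap_iff_of_not_reachable {v : V}
    (hxv : ¬ (kempeGraph F c α β).Reachable x v) {γ : κ} :
    IsMissing F (kempeSwap F c α β x) v γ ↔ IsMissing F c v γ := by
  refine forall₂_congr fun e he => forall_congr' fun hv => ?_
  rw [kempeSwap_apply_of_not_reachable hv hxv]

lemma isMissing_kempeSwap_iff_of_ne {v : V} {γ : κ} (hα : γ ≠ α) (hβ : γ ≠ β) :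
    IsMissing F (kempeSwap F c α β x) v γ ↔ IsMissing F c v γ := by
  by_cases hxv : (kempeGraph F c α β).Reachable x v
  · rw [isMissing_kempeSwap_iff_of_reachable hxv, Equiv.swap_apply_of_ne_of_ne hα hβ]
  · exact isMissing_kempeSwap_iff_of_not_reachable hxv

lemma IsFan.isMissing_kempeSwap {y : ℕ → V} {k i : ℕ} (hf : IsFan F c x y k)
    (hα : IsMissing F c x α) (hi : i < k) (hβ : c s(x, y (i + 1)) ≠ β) :
    IsMissing F (kempeSwap F c α β x) (y i) (kempeSwap F c α β x s(x, y (i + 1))) := by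
  have hα' : c s(x, y (i + 1)) ≠ α := hα _ (hf.mem i hi) (Sym2.mem_mk_left _ _)
  rw [kempeSwap_apply_of_ne hα' hβ, isMissing_kempeSwap_iff_of_ne hα' hβ]
  exact hf.isMissing i hi

end KempeSwap

variable {G : SimpleGraph V}

lemma exists_isMissing [Fintype V] [DecidableRel G.Adj] [Fintype κ]
    (hκ : G.maxDegree < Fintype.card κ) (hF : F ⊆ G.edgeSet) (v : V) :
    ∃ γ, IsMissing F c v γ := by
  classical
  by_contra! h
  have (γ : κ) : ∃ e : G.incidenceSet v, c e = γ := by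
    obtain ⟨e, he, hve, hce⟩ : ∃ e ∈ F, v ∈ e ∧ c e = γ := by simpa [IsMissing] using h γ
    exact ⟨⟨e, hF he, hve⟩, hce⟩
  choose f hf using this
  have := Fintype.card_le_of_injective f fun γ₁ γ₂ h => by rw [← hf γ₁, ← hf γ₂, h]
  rw [card_incidenceSet_eq_degree] at this
  exact (G.degree_le_maxDegree v |>.trans_lt hκ).not_ge this

lemma exists_maximal_isFan [Fintype V] (hF : F ⊆ G.edgeSet) {x y₀ : V} (hxy : G.Adj x y₀)
    (h₀ : s(x, y₀) ∉ F) : ∃ y k, IsFan F c x y k ∧ y 0 = y₀ ∧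
      ∀ w, s(x, w) ∈ F → IsMissing F c (y k) (c s(x, w)) → ∃ i ≤ k, y i = w := by
  set S := {k | ∃ y, IsFan F c x y k ∧ y 0 = y₀}
  have hS : BddAbove S := by
    refine ⟨Fintype.card V, fun k ⟨y, hf, _⟩ => ?_⟩
    have := card_le_card_of_injOn y (fun _ _ => mem_univ _) (by rw [coe_Iic]; exact hf.injOn)
    rw [Nat.card_Iic, card_univ] at this
    omega
  have h0 : 0 ∈ S := ⟨fun _ => y₀,
    ⟨fun i hi j hj _ => (Nat.le_zero.1 hi).trans (Nat.le_zero.1 hj).symm, fun _ _ => hxy.ne', h₀,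
      fun i hi => absurd hi i.not_lt_zero, fun i hi => absurd hi i.not_lt_zero⟩, rfl⟩
  obtain ⟨y, hf, hy₀⟩ := Nat.sSup_mem ⟨0, h0⟩ hS
  refine ⟨y, _, hf, hy₀, fun w hw hmiss => ?_⟩
  by_contra! hwy
  have hext := hf.extend hw (G.mem_edgeSet.1 (hF hw)).ne' hwy hmiss
  have : sSup S + 1 ≤ sSup S := le_csSup hS ⟨_, hext, by rwa [Function.update_of_ne (by omega)]⟩
  omega

theorem exists_properOn_insert [Fintype V] [DecidableRel G.Adj] [Fintype κ]
    (hκ : G.maxDegree < Fintype.card κ) (hF : F ⊆ G.edgeSet) (hc : ProperOn F c) {x y₀ : V}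
    (hxy : G.Adj x y₀) (h₀ : s(x, y₀) ∉ F) :
    ∃ c' : Sym2 V → κ, ProperOn (insert s(x, y₀) F) c' := by
  classical
  obtain ⟨y, k, hf, rfl, hmax⟩ := exists_maximal_isFan (c := c) hF hxy h₀
  obtain ⟨α, hα⟩ := exists_isMissing (c := c) hκ hF x
  obtain ⟨β, hβ⟩ := exists_isMissing (c := c) hκ hF (y k)
  by_cases hβx : IsMissing F c x β
  · exact hf.exists_properOn_insert hc hβx hβ
  obtain ⟨i, hik, hβi⟩ : ∃ i < k, c s(x, y (i + 1)) = β := by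
    obtain ⟨e, he, hxe, hce⟩ : ∃ e ∈ F, x ∈ e ∧ c e = β := by simpa [IsMissing] using hβx
    obtain ⟨w, rfl⟩ := Sym2.mem_iff_exists.1 hxe
    obtain ⟨j | i, hjk, rfl⟩ := hmax w he (hce ▸ hβ)
    exacts [absurd he hf.not_mem, ⟨i, hjk, hce⟩]
  have hβ' (l) (hl : l < k) (hli : l ≠ i) : c s(x, y (l + 1)) ≠ β := by
    refine hβi ▸ hc _ (hf.mem l hl) _ (hf.mem i hik) (fun h => hli ?_)
      ⟨x, Sym2.mem_mk_left _ _, Sym2.mem_mk_left _ _⟩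
    have := hf.injOn (show l + 1 ≤ k by omega) (show i + 1 ≤ k by omega) (Sym2.congr_right.1 h)
    omega
  have hβx' : IsMissing F (kempeSwap F c α β x) x β := by
    rwa [isMissing_kempeSwap_iff_of_reachable .rfl, Equiv.swap_apply_right]
  have hβp : IsMissing F c (y i) β := hβi ▸ hf.isMissing i hik
  by_cases hp : (kempeGraph F c α β).Reachable x (y i)
  · have hk : ¬ (kempeGraph F c α β).Reachable x (y k) :=
      kempeGraph_not_reachable_of_isMissing hc (hf.ne_center i hik.le).symm
        (hf.ne_center k le_rfl).symm (fun h => hik.ne (hf.injOn hik.le (le_refl k) h)) hα hβp hβ hp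
    refine (hf.of_isMissing fun l hl => ?_).exists_properOn_insert hc.kempeSwap hβx'
      ((isMissing_kempeSwap_iff_of_not_reachable hk).2 hβ)
    obtain rfl | hli := eq_or_ne l i
    · rwa [kempeSwap_apply_of_reachable (hf.mem l hl) (Sym2.mem_mk_left _ _) .rfl, hβi,
        Equiv.swap_apply_right, isMissing_kempeSwap_iff_of_reachable hp, Equiv.swap_apply_left]
    · exact hf.isMissing_kempeSwap hα hl (hβ' l hl hli)
  · refine ((hf.mono hik.le).of_isMissing fun l hl => ?_).exists_properOn_insert hc.kempeSwap hβx'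
      ((isMissing_kempeSwap_iff_of_not_reachable hp).2 hβp)
    exact hf.isMissing_kempeSwap hα (hl.trans hik) (hβ' l (hl.trans hik) hl.ne)

theorem exists_properOn_edgeSet [Fintype V] [DecidableRel G.Adj] [Fintype κ]
    (hκ : G.maxDegree < Fintype.card κ) : ∃ c : Sym2 V → κ, ProperOn G.edgeSet c := by
  classical
  suffices ∀ F : Finset (Sym2 V), ↑F ⊆ G.edgeSet → ∃ c : Sym2 V → κ, ProperOn F c by
    simpa using this G.edgeFinset (by simp)
  intro F
  induction F using Finset.induction_on with
  | empty =>
    obtain ⟨γ⟩ : Nonempty κ := Fintype.card_pos_iff.1 (by omega)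
    exact fun _ => ⟨fun _ => γ, fun e he => absurd he (by simp)⟩
  | insert e F he ih =>
    intro hsub
    rw [coe_insert, Set.insert_subset_iff] at hsub
    obtain ⟨c, hc⟩ := ih hsub.2
    induction e using Sym2.ind with
    | _ x y => simpa using exists_properOn_insert hκ hsub.2 hc hsub.1 he

lemma ProperOn.isRegularEdgeSet (hc : ProperOn F c) (γ : κ) :
    IsRegularEdgeSet {e ∈ F | c e = γ} 1 := by
  rintro v ⟨e, ⟨he, rfl⟩, hve⟩
  refine Set.ncard_eq_one.2 ⟨e, Set.eq_singleton_iff_unique_mem.2 ⟨⟨⟨he, rfl⟩, hve⟩, ?_⟩⟩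
  rintro f ⟨⟨hf, hcf⟩, hvf⟩
  by_contra hfe
  exact hc f hf e he hfe ⟨v, hvf, hve⟩ hcf

end EdgeColoring

open EdgeColoring

/-- Empty parts are allowed here: dropping them leaves a regular partition. -/
lemma regNum_le_card {ι : Type*} [Fintype ι] (G : SimpleGraph V) (P : ι → Set (Sym2 V))
    (hdisj : Pairwise fun i j => Disjoint (P i) (P j)) (hunion : ⋃ i, P i = G.edgeSet)
    (hreg : ∀ i, ∃ r, IsRegularEdgeSet (P i) r) : regNum G ≤ Fintype.card ι := by
  classical
  set I : Finset ι := {i | (P i).Nonempty}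
  have hQ : IsRegularPartition G fun j => P (I.equivFin.symm j) := by
    refine ⟨fun j => (mem_filter.1 (I.equivFin.symm j).2).2, fun j₁ j₂ h => hdisj ?_, ?_,
      fun j => hreg _⟩
    · exact fun h' => h (I.equivFin.symm.injective (Subtype.ext h'))
    · rw [← hunion]
      refine subset_antisymm (Set.iUnion_subset fun j => Set.subset_iUnion P _) ?_
      refine Set.iUnion_subset fun i e he => Set.mem_iUnion.2 ⟨I.equivFin ⟨i, ?_⟩, ?_⟩
      · exact mem_filter.2 ⟨mem_univ _, e, he⟩
      · rwa [Equiv.symm_apply_apply]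
  calc regNum G ≤ #I := Nat.sInf_le ⟨_, hQ⟩
    _ ≤ Fintype.card ι := card_le_univ I

lemma regNum_le_of_properOn {κ : Type*} [Fintype κ] {G : SimpleGraph V} {c : Sym2 V → κ}
    (hc : ProperOn G.edgeSet c) : regNum G ≤ Fintype.card κ := by
  refine regNum_le_card G (fun γ => {e ∈ G.edgeSet | c e = γ}) (fun γ₁ γ₂ h => ?_) ?_
    fun γ => ⟨1, hc.isRegularEdgeSet γ⟩
  · exact Set.disjoint_left.2 fun e h₁ h₂ => h (h₁.2.symm.trans h₂.2)
  · ext e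
    simp

theorem regNum_le_maxDegree_add_one_general [Fintype V] (G : SimpleGraph V) [DecidableRel G.Adj] :
    regNum G ≤ G.maxDegree + 1 := by
  obtain ⟨c, hc⟩ := exists_properOn_edgeSet (κ := Fin (G.maxDegree + 1)) (G := G) (by simp)
  simpa using regNum_le_of_properOn hc

/-- for every finite simple graph with at least one edge,
the regular number is at most the maximum degree plus one. -/
theorem regNum_le_maxDegree_add_one [Fintype V] (G : SimpleGraph V) [DecidableRel G.Adj]
    (hG : G.edgeSet.Nonempty) : regNum G ≤ G.maxDegree + 1 :=
  regNum_le_maxDegree_add_one_general G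
end

section
/- For every finite tree T with at least one edge, reg(T) = Δ(T), where Δ(T) is the maximum degree of T. -/
open SimpleGraph

variable {V : Type*}

section Aux

variable {W : Type*}

lemma adj_of_edge {G : SimpleGraph W} {e : Sym2 W} (he : e ∈ G.edgeSet) :
    ∃ x y, G.Adj x y := by
  revert he
  induction e using Sym2.ind with
  | _ x y => exact fun h => ⟨x, y, h⟩

/-- In a path starting at `a`, any edge of the form `s(a, w)` must be the first edge. -/
lemma path_first_edge {G : SimpleGraph W} {a b w : W}
    (p : G.Walk a b) (hp : p.IsPath) (hw : s(a, w) ∈ p.edges) : w = p.getVert 1 := by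
  cases p with
  | nil => simp at hw
  | cons h q =>
    rw [Walk.edges_cons, List.mem_cons] at hw
    rcases hw with hw | hw
    · rw [Sym2.congr_right] at hw
      simp [hw, Walk.getVert_cons_succ]
    · exact absurd (q.fst_mem_support_of_mem_edges hw)
        ((Walk.cons_isPath_iff h q).mp hp).2

/-- A finite acyclic graph with an edge has a leaf: a vertex with a unique neighbor. -/
lemma exists_leaf [Fintype W] {G : SimpleGraph W} (hac : G.IsAcyclic)
    (hne : ∃ x y, G.Adj x y) :
    ∃ a u, G.Adj a u ∧ ∀ w, G.Adj a w → w = u := by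
  classical
  obtain ⟨x, y, hxy⟩ := hne
  set S : Set ℕ := {n | ∃ (a b : W) (p : G.Walk a b), p.IsPath ∧ p.length = n} with hS
  have h1 : 1 ∈ S := ⟨x, y, (SimpleGraph.Path.singleton hxy).1,
    (SimpleGraph.Path.singleton hxy).2, rfl⟩
  have hbdd : BddAbove S := ⟨Fintype.card W, by
    rintro n ⟨a, b, p, hp, rfl⟩
    exact hp.length_lt.le⟩
  obtain ⟨a, b, p, hp, hlen⟩ := Nat.sSup_mem ⟨1, h1⟩ hbdd
  have hL1 : 1 ≤ sSup S := le_csSup hbdd h1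
  have hnil : ¬ p.Nil := by
    rw [Walk.nil_iff_length_eq, hlen]
    omega
  refine ⟨a, p.getVert 1, p.adj_snd hnil, ?_⟩
  intro w haw
  by_contra hwu
  by_cases hw : w ∈ p.support
  · have hr : (p.takeUntil w hw).IsPath := hp.takeUntil hw
    have hcyc : (Walk.cons haw.symm (p.takeUntil w hw)).IsCycle := by
      rw [Walk.cons_isCycle_iff]
      refine ⟨hr, fun hmem => ?_⟩
      have h2 := Walk.edges_takeUntil_subset p hw hmem
      rw [Sym2.eq_swap] at h2
      exact hwu (path_first_edge p hp h2)
    exact hac _ hcyc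
  · have hp' : (Walk.cons haw.symm p).IsPath :=
      (Walk.cons_isPath_iff _ _).mpr ⟨hp, hw⟩
    have hmem : p.length + 1 ∈ S := ⟨w, b, Walk.cons haw.symm p, hp', by simp⟩
    have := le_csSup hbdd hmem
    omega

/-- Greedy edge coloring of forests with `n ≥ Δ` colors. -/
lemma forest_coloring [Fintype W] {n : ℕ} (hn : 0 < n) :
    ∀ (k : ℕ) (G : SimpleGraph W), G.IsAcyclic → G.edgeSet.ncard = k →
      (∀ v, (G.neighborSet v).ncard ≤ n) →
      ∃ C : Sym2 W → Fin n, IsProperEdgeColoring G C := by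
  classical
  intro k
  induction k using Nat.strong_induction_on with
  | _ k IH =>
    intro G hac hcard hdeg
    by_cases hE : G.edgeSet = ∅
    · exact ⟨fun _ => ⟨0, hn⟩, fun e₁ he₁ => by simp [hE] at he₁⟩
    · obtain ⟨e, he⟩ := Set.nonempty_iff_ne_empty.mpr hE
      obtain ⟨a, u, hau, huniq⟩ := exists_leaf hac (adj_of_edge he)
      set G' := G.deleteEdges {s(a, u)} with hG'
      have hle : G' ≤ G := G.deleteEdges_le _
      have hES : G'.edgeSet = G.edgeSet \ {s(a, u)} := G.edgeSet_deleteEdges _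
      have hmem : s(a, u) ∈ G.edgeSet := hau
      have hcard' : G'.edgeSet.ncard < k := by
        rw [hES, ← hcard]
        exact Set.ncard_diff_singleton_lt_of_mem hmem (Set.toFinite _)
      have hac' : G'.IsAcyclic := fun v c hc => hac _ (hc.mapLe hle)
      have hdeg' : ∀ v, (G'.neighborSet v).ncard ≤ n := fun v =>
        le_trans (Set.ncard_le_ncard (fun w hw => hle hw) (Set.toFinite _)) (hdeg v)
      obtain ⟨C', hC'⟩ := IH _ hcard' G' hac' rfl hdeg'
      have hne_au : a ≠ u := G.ne_of_adj hau
      -- the set of colors used at `u` in `G'`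
      set Su : Set (Fin n) := (fun w => C' s(u, w)) '' (G'.neighborSet u) with hSu
      have hNu : G'.neighborSet u = G.neighborSet u \ {a} := by
        ext w
        simp only [mem_neighborSet, hG', deleteEdges_adj, Set.mem_diff,
          Set.mem_singleton_iff]
        constructor
        · rintro ⟨h1, h2⟩
          refine ⟨h1, fun hwa => h2 ?_⟩
          subst hwa
          rw [Sym2.eq_swap]
        · rintro ⟨h1, h2⟩
          refine ⟨h1, fun hs => h2 ?_⟩
          rw [Sym2.eq_iff] at hs
          rcases hs with ⟨h3, h4⟩ | ⟨h3, h4⟩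
          · exact absurd h3.symm hne_au
          · exact h4
      have hSu_lt : Su.ncard < n := by
        calc Su.ncard ≤ (G'.neighborSet u).ncard :=
              Set.ncard_image_le (Set.toFinite _)
          _ < (G.neighborSet u).ncard := by
              rw [hNu]
              exact Set.ncard_diff_singleton_lt_of_mem hau.symm (Set.toFinite _)
          _ ≤ n := hdeg u
      have hfree : ∃ c : Fin n, c ∉ Su := by
        by_contra h
        push_neg at h
        have huniv : Su = Set.univ := Set.eq_univ_of_forall h
        rw [huniv, Set.ncard_univ, Nat.card_eq_fintype_card, Fintype.card_fin] at hSu_lt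
        omega
      obtain ⟨c, hc⟩ := hfree
      refine ⟨fun f => if f = s(a, u) then c else C' f, ?_⟩
      have key : ∀ e₂ ∈ G.edgeSet, e₂ ≠ s(a, u) → (∃ x, x ∈ s(a, u) ∧ x ∈ e₂) →
          C' e₂ ≠ c := by
        rintro e₂ he₂ hne2 ⟨z, hz1, hz2⟩
        rcases Sym2.mem_iff.mp hz1 with rfl | rfl
        · -- z = a : impossible since a is a leaf
          obtain ⟨w, rfl⟩ := Sym2.mem_iff_exists.mp hz2
          have hadj : G.Adj z w := G.mem_edgeSet.mp he₂
          exact absurd (by rw [huniq w hadj]) hne2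
        · -- z = u : e₂ is an edge of G' at u, so its color is in Su
          obtain ⟨w, rfl⟩ := Sym2.mem_iff_exists.mp hz2
          have hadj' : G'.Adj z w := by
            rw [hG', deleteEdges_adj]
            exact ⟨G.mem_edgeSet.mp he₂, by simpa using hne2⟩
          intro hcon
          exact hc ⟨w, hadj', hcon⟩
      intro e₁ he₁ e₂ he₂ hne12 hshare
      by_cases h1 : e₁ = s(a, u) <;> by_cases h2 : e₂ = s(a, u)
      · exact absurd (h1.trans h2.symm) hne12
      · subst h1
        simp only [if_pos rfl, if_neg h2]
        exact (key e₂ he₂ h2 hshare).symm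
      · subst h2
        simp only [if_pos rfl, if_neg h1]
        obtain ⟨z, hz1, hz2⟩ := hshare
        exact key e₁ he₁ h1 ⟨z, hz2, hz1⟩
      · simp only [if_neg h1, if_neg h2]
        exact hC' e₁ (by rw [hES]; exact ⟨he₁, h1⟩) e₂ (by rw [hES]; exact ⟨he₂, h2⟩)
          hne12 hshare

/-- A nonempty regular edge subset of the edge set of an acyclic graph is a matching. -/
lemma matching_of_regular [Fintype W] {T : SimpleGraph W} (hac : T.IsAcyclic)
    {F : Set (Sym2 W)} (hFE : F ⊆ T.edgeSet) (hne : F.Nonempty) {r : ℕ}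
    (hreg : IsRegularEdgeSet F r) :
    ∀ ⦃e₁ e₂ : Sym2 W⦄ ⦃v : W⦄, e₁ ∈ F → e₂ ∈ F → v ∈ e₁ → v ∈ e₂ → e₁ = e₂ := by
  classical
  set H := fromEdgeSet F with hH
  have hHE : H.edgeSet = F := by
    rw [hH, edgeSet_fromEdgeSet]
    ext f
    simp only [Set.mem_diff, Set.mem_setOf_eq, and_iff_left_iff_imp]
    intro hf
    exact T.not_isDiag_of_mem_edgeSet (hFE hf)
  have hleT : H ≤ T := by
    have h := fromEdgeSet_mono hFE
    rwa [fromEdgeSet_edgeSet] at h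
  have hacH : H.IsAcyclic := fun v c hc => hac _ (hc.mapLe hleT)
  obtain ⟨e₀, he₀⟩ := hne
  have he₀H : e₀ ∈ H.edgeSet := hHE ▸ he₀
  obtain ⟨a, u, hadj, huniq⟩ := exists_leaf hacH (adj_of_edge he₀H)
  have hsau : s(a, u) ∈ F := hHE ▸ (H.mem_edgeSet.mpr hadj)
  have hset : {f ∈ F | a ∈ f} = {s(a, u)} := by
    ext f
    constructor
    · rintro ⟨hf, haf⟩
      obtain ⟨w, rfl⟩ := Sym2.mem_iff_exists.mp haf
      have hfH : s(a, w) ∈ H.edgeSet := hHE ▸ hf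
      have : H.Adj a w := H.mem_edgeSet.mp hfH
      rw [huniq w this]
      rfl
    · rintro rfl
      exact ⟨hsau, by simp⟩
  have h1 : edgeDeg F a = 1 := by
    rw [edgeDeg, hset, Set.ncard_singleton]
  have hr1 : r = 1 := by
    have := hreg a ⟨s(a, u), hsau, by simp⟩
    omega
  intro e₁ e₂ v h₁ h₂ hv₁ hv₂
  have hv := hreg v ⟨e₁, h₁, hv₁⟩
  rw [hr1] at hv
  obtain ⟨f, hf⟩ := Set.ncard_eq_one.mp hv
  have he₁f : e₁ = f := by
    have : e₁ ∈ {g ∈ F | v ∈ g} := ⟨h₁, hv₁⟩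
    rwa [hf, Set.mem_singleton_iff] at this
  have he₂f : e₂ = f := by
    have : e₂ ∈ {g ∈ F | v ∈ g} := ⟨h₂, hv₂⟩
    rwa [hf, Set.mem_singleton_iff] at this
  rw [he₁f, he₂f]

end Aux

/-- for every finite tree (connected acyclic graph) with at least one edge,
the regular number equals the maximum degree. -/
theorem regNum_tree_eq_maxDegree [Fintype V] (T : SimpleGraph V) [DecidableRel T.Adj]
    (hconn : T.Connected) (hacyclic : T.IsAcyclic) (hT : T.edgeSet.Nonempty) :
    regNum T = T.maxDegree := by
  classical
  obtain ⟨e, he⟩ := hT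
  obtain ⟨x, y, hxy⟩ := adj_of_edge he
  haveI : Nonempty V := ⟨x⟩
  set Δ := T.maxDegree with hΔ
  have hdegx : 1 ≤ T.degree x := by
    rw [← T.card_neighborFinset_eq_degree]
    exact Finset.card_pos.mpr ⟨y, (T.mem_neighborFinset x y).mpr hxy⟩
  have hΔpos : 0 < Δ := lt_of_lt_of_le hdegx (T.degree_le_maxDegree x)
  have hncard_deg : ∀ v : V, (T.neighborSet v).ncard = T.degree v := fun v => by
    rw [← Nat.card_coe_set_eq, Nat.card_eq_fintype_card,
      T.card_neighborSet_eq_degree]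
  -- upper bound : a regular partition with Δ parts from a proper edge coloring
  obtain ⟨C, hC⟩ := forest_coloring hΔpos (T.edgeSet.ncard) T hacyclic rfl
    (fun v => by rw [hncard_deg]; exact T.degree_le_maxDegree v)
  set P : Fin Δ → Set (Sym2 V) := fun i => {f ∈ T.edgeSet | C f = i} with hP
  obtain ⟨v, hv⟩ := T.exists_maximal_degree_vertex
  have hPmem : Δ ∈ {t | ∃ P : Fin t → Set (Sym2 V), IsRegularPartition T P} := by
    refine ⟨P, ?_, ?_, ?_, ?_⟩
    · -- nonempty parts
      intro i
      have hcardv : Fintype.card (T.neighborFinset v) = Δ := by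
        rw [Fintype.card_coe]
        exact (hv.symm : T.degree v = Δ)
      set φ : T.neighborFinset v → Fin Δ := fun w => C s(v, w.1) with hφ
      have hinj : Function.Injective φ := by
        intro w₁ w₂ hEq
        by_contra hne'
        have hne'' : s(v, w₁.1) ≠ s(v, w₂.1) := fun h =>
          hne' (Subtype.ext (Sym2.congr_right.mp h))
        exact hC s(v, w₁.1)
          (T.mem_edgeSet.mpr ((T.mem_neighborFinset v w₁.1).mp w₁.2))
          s(v, w₂.1)
          (T.mem_edgeSet.mpr ((T.mem_neighborFinset v w₂.1).mp w₂.2))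
          hne'' ⟨v, by simp, by simp⟩ hEq
      have hbij : Function.Bijective φ :=
        (Fintype.bijective_iff_injective_and_card φ).mpr
          ⟨hinj, by rw [hcardv, Fintype.card_fin]⟩
      obtain ⟨w, hw⟩ := hbij.2 i
      exact ⟨s(v, w.1),
        T.mem_edgeSet.mpr ((T.mem_neighborFinset v w.1).mp w.2), hw⟩
    · -- disjoint
      intro i j hij
      rw [Set.disjoint_left]
      rintro f ⟨_, hfi⟩ ⟨_, hfj⟩
      exact hij (hfi ▸ hfj ▸ rfl)
    · -- union
      ext f
      simp only [Set.mem_iUnion, hP, Set.mem_setOf_eq]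
      exact ⟨fun ⟨i, hf, _⟩ => hf, fun hf => ⟨C f, hf, rfl⟩⟩
    · -- each part is 1-regular
      intro i
      refine ⟨1, fun v' ⟨f₀, hf₀, hvf₀⟩ => ?_⟩
      rw [edgeDeg]
      apply Set.ncard_eq_one.mpr
      refine ⟨f₀, ?_⟩
      ext g
      simp only [Set.mem_setOf_eq, Set.mem_singleton_iff]
      constructor
      · rintro ⟨⟨hgE, hgi⟩, hvg⟩
        by_contra hgf
        exact hC g hgE f₀ hf₀.1 hgf ⟨v', hvg, hvf₀⟩ (hgi.trans hf₀.2.symm)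
      · rintro rfl
        exact ⟨hf₀, hvf₀⟩
  -- lower bound : every regular partition has at least Δ parts
  have hlow : ∀ t ∈ {t | ∃ P : Fin t → Set (Sym2 V), IsRegularPartition T P},
      Δ ≤ t := by
    rintro t ⟨Q, hQne, hQdisj, hQunion, hQreg⟩
    have hQsub : ∀ i, Q i ⊆ T.edgeSet := fun i =>
      hQunion ▸ Set.subset_iUnion Q i
    have hmatch : ∀ i, ∀ ⦃e₁ e₂ : Sym2 V⦄ ⦃w : V⦄,
        e₁ ∈ Q i → e₂ ∈ Q i → w ∈ e₁ → w ∈ e₂ → e₁ = e₂ := by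
      intro i
      obtain ⟨r, hr⟩ := hQreg i
      exact matching_of_regular hacyclic (hQsub i) (hQne i) hr
    have hedge : ∀ w : T.neighborFinset v, ∃ i, s(v, w.1) ∈ Q i := by
      intro w
      have : s(v, w.1) ∈ T.edgeSet :=
        T.mem_edgeSet.mpr ((T.mem_neighborFinset v w.1).mp w.2)
      rw [← hQunion] at this
      exact Set.mem_iUnion.mp this
    choose ψ hψ using hedge
    have hinj : Function.Injective ψ := by
      intro w₁ w₂ hEq
      have h1 := hψ w₁
      have h2 := hψ w₂
      rw [hEq] at h1
      have := hmatch (ψ w₂) h1 h2 (Sym2.mem_mk_left v w₁.1) (Sym2.mem_mk_left v w₂.1)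
      exact Subtype.ext (Sym2.congr_right.mp this)
    have hcardv : Fintype.card (T.neighborFinset v) = Δ := by
      rw [Fintype.card_coe]
      exact (hv.symm : T.degree v = Δ)
    calc Δ = Fintype.card (T.neighborFinset v) := hcardv.symm
      _ ≤ Fintype.card (Fin t) := Fintype.card_le_of_injective ψ hinj
      _ = t := Fintype.card_fin t
  rw [regNum]
  exact le_antisymm (Nat.sInf_le hPmem) (le_csInf ⟨Δ, hPmem⟩ hlow)
end

section
/- Let G be a finite simple graph with at least one edge and d ≥ 1 an integer such that every edge of G has at least one endpoint of degree at most d in G. Then reg(G) ≥ ⌈Δ(G)/d⌉, where Δ(G) is the maximum degree of G. -/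
open SimpleGraph

variable {V : Type*}

lemma ncard_iUnion_fin_le {α : Type*} : ∀ (n : ℕ) (A : Fin n → Set α),
    (⋃ i, A i).ncard ≤ ∑ i, (A i).ncard := by
  intro n
  induction n with
  | zero => simp
  | succ n ih =>
    intro A
    have hU : (⋃ i, A i) = A 0 ∪ ⋃ i : Fin n, A i.succ := by
      ext x
      simp [Fin.exists_fin_succ]
    rw [hU, Fin.sum_univ_succ]
    exact le_trans (Set.ncard_union_le _ _) (by gcongr; exact ih _)

/-- Any regular partition of `G` into `t` parts satisfies `Δ(G) ≤ t * d`. -/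
lemma maxDegree_le_parts_mul [Fintype V] (G : SimpleGraph V) [DecidableRel G.Adj]
    (d : ℕ) (h : ∀ e ∈ G.edgeSet, ∃ x ∈ e, G.degree x ≤ d)
    {t : ℕ} (P : Fin t → Set (Sym2 V)) (hP : IsRegularPartition G P) :
    G.maxDegree ≤ t * d := by
  classical
  obtain ⟨hne, hdisj, hunion, hreg⟩ := hP
  apply SimpleGraph.maxDegree_le_of_forall_degree_le
  intro v
  -- degree v = ncard of incidence set
  have hdeg : G.degree v = (G.incidenceSet v).ncard := by
    rw [Set.ncard_eq_toFinset_card', Set.toFinset_card, SimpleGraph.card_incidenceSet_eq_degree]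
  have hsub : G.incidenceSet v ⊆ ⋃ i, {e ∈ P i | v ∈ e} := by
    intro e he
    obtain ⟨heE, hve⟩ := he
    rw [← hunion] at heE
    obtain ⟨i, hi⟩ := Set.mem_iUnion.mp heE
    exact Set.mem_iUnion.mpr ⟨i, hi, hve⟩
  have hle : G.degree v ≤ ∑ i, edgeDeg (P i) v := by
    rw [hdeg]
    calc (G.incidenceSet v).ncard ≤ (⋃ i, {e ∈ P i | v ∈ e}).ncard := by
          exact Set.ncard_le_ncard hsub (Set.toFinite _)
      _ ≤ ∑ i, edgeDeg (P i) v := ncard_iUnion_fin_le _ _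
  refine hle.trans ?_
  have hbound : ∀ i, edgeDeg (P i) v ≤ d := by
    intro i
    by_cases h0 : edgeDeg (P i) v = 0
    · omega
    · -- there's an edge of P i through v
      have hex : ∃ e ∈ P i, v ∈ e := by
        by_contra hc
        push_neg at hc
        apply h0
        have : {e ∈ P i | v ∈ e} = ∅ := by
          ext e; simp only [Set.mem_setOf_eq, Set.mem_empty_iff_false, iff_false]
          rintro ⟨he, hv⟩; exact hc e he hv
        simp [edgeDeg, this]
      obtain ⟨e, heP, hve⟩ := hex
      obtain ⟨r, hr⟩ := hreg i
      have heE : e ∈ G.edgeSet := by rw [← hunion]; exact Set.mem_iUnion.mpr ⟨i, heP⟩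
      obtain ⟨x, hxe, hxd⟩ := h e heE
      have hrx : edgeDeg (P i) x = r := hr x ⟨e, heP, hxe⟩
      have hrv : edgeDeg (P i) v = r := hr v ⟨e, heP, hve⟩
      have hxle : edgeDeg (P i) x ≤ G.degree x := by
        rw [show G.degree x = (G.incidenceSet x).ncard by
          rw [Set.ncard_eq_toFinset_card', Set.toFinset_card,
            SimpleGraph.card_incidenceSet_eq_degree]]
        apply Set.ncard_le_ncard _ (Set.toFinite _)
        intro f hf
        obtain ⟨hfP, hxf⟩ := hf
        exact ⟨by rw [← hunion]; exact Set.mem_iUnion.mpr ⟨i, hfP⟩, hxf⟩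
      omega
  calc ∑ i, edgeDeg (P i) v ≤ ∑ _i : Fin t, d := Finset.sum_le_sum fun i _ => hbound i
    _ = t * d := by simp [Finset.sum_const, Nat.smul_one_eq_cast]

/-- The trivial partition into single edges shows the partition set is nonempty. -/
lemma regNum_mem [Fintype V] (G : SimpleGraph V) [DecidableRel G.Adj] :
    ∃ P : Fin (regNum G) → Set (Sym2 V), IsRegularPartition G P := by
  classical
  have hne : {t | ∃ P : Fin t → Set (Sym2 V), IsRegularPartition G P}.Nonempty := by
    refine ⟨Fintype.card G.edgeSet, ?_⟩
    set E := Fintype.equivFin G.edgeSet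
    refine ⟨fun i => {(E.symm i : Sym2 V)}, fun i => ⟨_, rfl⟩, ?_, ?_, ?_⟩
    · intro i j hij
      rw [Set.disjoint_singleton_left, Set.mem_singleton_iff]
      intro hc
      exact hij (E.symm.injective (Subtype.ext hc))
    · ext e
      simp only [Set.mem_iUnion, Set.mem_singleton_iff]
      constructor
      · rintro ⟨i, rfl⟩; exact (E.symm i).2
      · intro he; exact ⟨E ⟨e, he⟩, by simp⟩
    · intro i
      refine ⟨1, fun v ⟨e, he, hve⟩ => ?_⟩
      rw [Set.mem_singleton_iff] at he
      subst he
      have : {f ∈ ({(E.symm i : Sym2 V)} : Set (Sym2 V)) | v ∈ f}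
          = {(E.symm i : Sym2 V)} := by
        ext f
        simp only [Set.mem_setOf_eq, Set.mem_singleton_iff]
        exact ⟨fun ⟨hf, _⟩ => hf, fun hf => ⟨hf, hf ▸ hve⟩⟩
      unfold edgeDeg
      rw [this]
      exact Set.ncard_singleton _
  exact Nat.sInf_mem hne

/-- if `G` has at least one edge and every edge of `G` has an endpoint of
degree at most `d`, then `reg(G) ≥ ⌈Δ(G)/d⌉`. -/
theorem ceil_div_le_regNum [Fintype V] (G : SimpleGraph V) [DecidableRel G.Adj]
    (hG : G.edgeSet.Nonempty) (d : ℕ) (hd : 1 ≤ d)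
    (h : ∀ e ∈ G.edgeSet, ∃ x ∈ e, G.degree x ≤ d) :
    ⌈(G.maxDegree : ℚ) / (d : ℚ)⌉ ≤ (regNum G : ℤ) := by
  obtain ⟨P, hP⟩ := regNum_mem G
  have hΔ : G.maxDegree ≤ regNum G * d := maxDegree_le_parts_mul G d h P hP
  rw [Int.ceil_le]
  push_cast
  rw [div_le_iff₀ (by positivity)]
  exact_mod_cast hΔ
end

section
/- Let G be a finite connected simple graph in which every vertex has degree 3 or degree 6, and in which both a vertex of degree 3 and a vertex of degree 6 occur. If E(G) is partitioned into two nonempty subsets E_1 and E_2 such that the subgraph induced by E_1 is r_1-regular and the subgraph induced by E_2 is r_2-regular, then r_1 = r_2 = 3. -/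
open SimpleGraph

variable {V : Type*}

/-- At any vertex, the edge-degree with respect to an `r`-regular edge set is `0` or `r`. -/
lemma edgeDeg_cases (F : Set (Sym2 V)) (r : ℕ) (h : IsRegularEdgeSet F r) (v : V) :
    edgeDeg F v = 0 ∨ edgeDeg F v = r := by
  by_cases hv : ∃ e ∈ F, v ∈ e
  · exact Or.inr (h v hv)
  · left
    push_neg at hv
    have : {e ∈ F | v ∈ e} = ∅ := by
      ext e; simp only [Set.mem_sep_iff, Set.mem_empty_iff_false, iff_false, not_and]
      exact hv e
    rw [edgeDeg, this, Set.ncard_empty]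

/-- If the edge-degree at `v` of an `r`-regular edge set (`r ≠ 0`) is `0`, then `v` is
incident with no edge of the set. -/
lemma edgeDeg_zero_not_touch (F : Set (Sym2 V)) (r : ℕ) (h : IsRegularEdgeSet F r)
    (hr : r ≠ 0) (v : V) (h0 : edgeDeg F v = 0) : ¬ ∃ e ∈ F, v ∈ e := by
  intro hv
  exact hr ((h v hv).symm.trans h0)

/-- The degree of a vertex decomposes along a partition of the edge set in two parts. -/
lemma degree_decomp [Fintype V] (G : SimpleGraph V) [DecidableRel G.Adj]
    (E₁ E₂ : Set (Sym2 V)) (hdisj : Disjoint E₁ E₂) (hcover : E₁ ∪ E₂ = G.edgeSet) (v : V) :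
    G.degree v = edgeDeg E₁ v + edgeDeg E₂ v := by
  classical
  have h1 : {e ∈ E₁ | v ∈ e} ∪ {e ∈ E₂ | v ∈ e} = G.incidenceSet v := by
    ext e
    simp only [Set.mem_union, Set.mem_sep_iff, SimpleGraph.incidenceSet, Set.mem_setOf_eq,
      ← hcover]
    tauto
  have h2 : Disjoint {e ∈ E₁ | v ∈ e} {e ∈ E₂ | v ∈ e} :=
    hdisj.mono (Set.sep_subset _ _) (Set.sep_subset _ _)
  have h3 := Set.ncard_union_eq h2 (Set.toFinite _) (Set.toFinite _)
  rw [h1] at h3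
  rw [edgeDeg, edgeDeg, ← h3, ← Nat.card_coe_set_eq, Nat.card_eq_fintype_card,
    SimpleGraph.card_incidenceSet_eq_degree]

/-- The case `r₁ = 6`, `r₂ = 3` is impossible in a connected graph with both degrees present:
the `6`-regular part and the `3`-regular part would live on disjoint vertex sets. -/
lemma aux_contra [Fintype V] (G : SimpleGraph V) [DecidableRel G.Adj]
    (hconn : G.Connected)
    (hdeg : ∀ v : V, G.degree v = 3 ∨ G.degree v = 6)
    (h3 : ∃ v : V, G.degree v = 3) (h6 : ∃ v : V, G.degree v = 6)
    (E₁ E₂ : Set (Sym2 V))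
    (hcover : E₁ ∪ E₂ = G.edgeSet)
    (hdecomp : ∀ v, G.degree v = edgeDeg E₁ v + edgeDeg E₂ v)
    (hreg₁ : IsRegularEdgeSet E₁ 6) (hreg₂ : IsRegularEdgeSet E₂ 3) : False := by
  classical
  set S : Set V := {v | ∃ e ∈ E₁, v ∈ e} with hS
  have hmemS : ∀ v ∈ S, edgeDeg E₁ v = 6 := fun v hv => hreg₁ v hv
  have hnotS : ∀ v ∉ S, edgeDeg E₁ v = 0 := by
    intro v hv
    rcases edgeDeg_cases E₁ 6 hreg₁ v with h | h
    · exact h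
    · exfalso; apply hv
      have : 0 < edgeDeg E₁ v := by omega
      rw [edgeDeg, Set.ncard_pos (Set.toFinite _)] at this
      obtain ⟨e, he, hve⟩ := this
      exact ⟨e, he, hve⟩
  have hS_noE₂ : ∀ v ∈ S, ¬ ∃ e ∈ E₂, v ∈ e := by
    intro v hv
    have hd := hdecomp v
    rw [hmemS v hv] at hd
    have h2 : edgeDeg E₂ v = 0 := by rcases hdeg v with h | h <;> omega
    exact edgeDeg_zero_not_touch E₂ 3 hreg₂ (by norm_num) v h2
  have hstep : ∀ x y : V, G.Adj x y → (x ∈ S → y ∈ S) := by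
    intro x y hxy hx
    have he : s(x, y) ∈ E₁ ∪ E₂ := by rw [hcover]; exact hxy
    rcases he with he | he
    · exact ⟨s(x, y), he, Sym2.mem_mk_right x y⟩
    · exact absurd ⟨s(x, y), he, Sym2.mem_mk_left x y⟩ (hS_noE₂ x hx)
  have key : ∀ {x y : V} (_ : G.Walk x y), x ∈ S → y ∈ S := by
    intro x y p
    induction p with
    | nil => exact id
    | cons h _ ih => exact fun hx => ih (hstep _ _ h hx)
  obtain ⟨u, hu⟩ := h3
  obtain ⟨w, hw⟩ := h6
  have hwS : w ∈ S := by
    by_contra hws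
    have hd := hdecomp w
    rw [hnotS w hws, hw] at hd
    rcases edgeDeg_cases E₂ 3 hreg₂ w with h | h <;> omega
  have huS : u ∉ S := by
    intro hus
    have hd := hdecomp u
    rw [hmemS u hus, hu] at hd
    omega
  obtain ⟨p⟩ := hconn w u
  exact huS (key p hwS)

/-- if `G` is connected, every vertex has degree `3` or `6`, and both
degrees occur, then in any partition of the edge set into two nonempty regular parts,
both parts induce `3`-regular subgraphs. -/
theorem parts_are_cubic [Fintype V] (G : SimpleGraph V) [DecidableRel G.Adj]
    (hconn : G.Connected)
    (hdeg : ∀ v : V, G.degree v = 3 ∨ G.degree v = 6)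
    (h3 : ∃ v : V, G.degree v = 3) (h6 : ∃ v : V, G.degree v = 6)
    (E₁ E₂ : Set (Sym2 V)) (r₁ r₂ : ℕ)
    (h₁ : E₁.Nonempty) (h₂ : E₂.Nonempty)
    (hdisj : Disjoint E₁ E₂) (hcover : E₁ ∪ E₂ = G.edgeSet)
    (hreg₁ : IsRegularEdgeSet E₁ r₁) (hreg₂ : IsRegularEdgeSet E₂ r₂) :
    r₁ = 3 ∧ r₂ = 3 := by
  classical
  have hdecomp := degree_decomp G E₁ E₂ hdisj hcover
  have hr : ∀ (F : Set (Sym2 V)) (r : ℕ), IsRegularEdgeSet F r → F.Nonempty →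
      F ⊆ G.edgeSet → 1 ≤ r := by
    intro F r hreg ⟨e, he⟩ hsub
    induction e using Sym2.ind with
    | _ x y =>
      have hx : ∃ e ∈ F, x ∈ e := ⟨s(x, y), he, Sym2.mem_mk_left x y⟩
      have h1 := hreg x hx
      have h2 : 0 < edgeDeg F x := by
        rw [edgeDeg, Set.ncard_pos (Set.toFinite _)]
        exact ⟨s(x, y), he, Sym2.mem_mk_left x y⟩
      omega
  have hr₁ : 1 ≤ r₁ := hr E₁ r₁ hreg₁ h₁ (hcover ▸ Set.subset_union_left)
  have hr₂ : 1 ≤ r₂ := hr E₂ r₂ hreg₂ h₂ (hcover ▸ Set.subset_union_right)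
  obtain ⟨u, hu⟩ := h3
  obtain ⟨w, hw⟩ := h6
  have hdu := hdecomp u; have hdw := hdecomp w
  rw [hu] at hdu; rw [hw] at hdw
  have c1u := edgeDeg_cases E₁ r₁ hreg₁ u
  have c2u := edgeDeg_cases E₂ r₂ hreg₂ u
  have c1w := edgeDeg_cases E₁ r₁ hreg₁ w
  have c2w := edgeDeg_cases E₂ r₂ hreg₂ w
  have hmain : (r₁ = 3 ∧ r₂ = 3) ∨ (r₁ = 6 ∧ r₂ = 3) ∨ (r₁ = 3 ∧ r₂ = 6) := by omega
  rcases hmain with ⟨ha, hb⟩ | ⟨ha, hb⟩ | ⟨ha, hb⟩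
  · exact ⟨ha, hb⟩
  · subst ha; subst hb
    exact absurd (aux_contra G hconn hdeg ⟨u, hu⟩ ⟨w, hw⟩ E₁ E₂ hcover hdecomp hreg₁ hreg₂) id
  · subst ha; subst hb
    have hcover' : E₂ ∪ E₁ = G.edgeSet := by rw [Set.union_comm]; exact hcover
    have hdecomp' : ∀ v, G.degree v = edgeDeg E₂ v + edgeDeg E₁ v := by
      intro v; rw [hdecomp v, Nat.add_comm]
    exact absurd (aux_contra G hconn hdeg ⟨u, hu⟩ ⟨w, hw⟩ E₂ E₁ hcover' hdecomp' hreg₂ hreg₁) id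
end

section
/- Let r ≥ 3 be an integer, let G be a finite r-regular simple graph, and let G' be the disjoint union of G and the star K_{1,r}. Then reg(G') = Δ(G') if and only if χ'(G) = Δ(G); that is, reg(G') = r if and only if G has a proper edge coloring with r colors. -/
open SimpleGraph

variable {V : Type*}

lemma edgeDeg_eq_one {W : Type*} {F : Set (Sym2 W)} {v : W} {e₀ : Sym2 W} (h₀ : e₀ ∈ F)
    (hv : v ∈ e₀) (huniq : ∀ e ∈ F, v ∈ e → e = e₀) : edgeDeg F v = 1 := by
  have h : {e ∈ F | v ∈ e} = {e₀} := by
    ext e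
    constructor
    · rintro ⟨he, hve⟩; exact huniq e he hve
    · rintro rfl; exact ⟨h₀, hv⟩
  rw [edgeDeg, h, Set.ncard_singleton]

lemma edgeDeg_one_unique {W : Type*} {F : Set (Sym2 W)} {v : W} (h : edgeDeg F v = 1)
    {e₁ e₂ : Sym2 W} (h₁ : e₁ ∈ F) (h₂ : e₂ ∈ F) (hv₁ : v ∈ e₁) (hv₂ : v ∈ e₂) : e₁ = e₂ := by
  rw [edgeDeg, Set.ncard_eq_one] at h
  obtain ⟨a, ha⟩ := h
  have m₁ : e₁ ∈ ({a} : Set (Sym2 W)) := ha ▸ ⟨h₁, hv₁⟩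
  have m₂ : e₂ ∈ ({a} : Set (Sym2 W)) := ha ▸ ⟨h₂, hv₂⟩
  simp only [Set.mem_singleton_iff] at m₁ m₂
  rw [m₁, m₂]

def sedge (V : Type*) (r : ℕ) (j : Fin r) : Sym2 (V ⊕ (Fin 1 ⊕ Fin r)) :=
  s(Sum.inr (Sum.inl 0), Sum.inr (Sum.inr j))

lemma sedge_mem (G : SimpleGraph V) {r : ℕ} (j : Fin r) :
    sedge V r j ∈ (G ⊕g completeBipartiteGraph (Fin 1) (Fin r)).edgeSet := by
  simp [sedge]

lemma sedge_inj {r : ℕ} {i j : Fin r} (h : sedge V r i = sedge V r j) : i = j := by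
  simpa [sedge] using h

lemma map_inl_mem (G : SimpleGraph V) {r : ℕ} {f : Sym2 V} (hf : f ∈ G.edgeSet) :
    Sym2.map Sum.inl f ∈ (G ⊕g completeBipartiteGraph (Fin 1) (Fin r)).edgeSet := by
  induction f with
  | _ a b => simpa using hf

lemma edge_classify (G : SimpleGraph V) {r : ℕ} {e : Sym2 (V ⊕ (Fin 1 ⊕ Fin r))}
    (he : e ∈ (G ⊕g completeBipartiteGraph (Fin 1) (Fin r)).edgeSet) :
    (∃ f ∈ G.edgeSet, e = Sym2.map Sum.inl f) ∨ (∃ j : Fin r, e = sedge V r j) := by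
  induction e with
  | _ a b =>
    rw [SimpleGraph.mem_edgeSet] at he
    match a, b with
    | Sum.inl a, Sum.inl b => exact Or.inl ⟨s(a, b), he, by simp⟩
    | Sum.inl a, Sum.inr b => simp at he
    | Sum.inr a, Sum.inl b => simp at he
    | Sum.inr (Sum.inl x), Sum.inr (Sum.inr y) =>
      exact Or.inr ⟨y, by rw [Fin.fin_one_eq_zero x]; rfl⟩
    | Sum.inr (Sum.inr y), Sum.inr (Sum.inl x) =>
      exact Or.inr ⟨y, by rw [Fin.fin_one_eq_zero x, sedge, Sym2.eq_swap]⟩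
    | Sum.inr (Sum.inl x), Sum.inr (Sum.inl x') => simp at he
    | Sum.inr (Sum.inr y), Sum.inr (Sum.inr y') => simp at he

lemma leaf_unique (G : SimpleGraph V) {r : ℕ} {e : Sym2 (V ⊕ (Fin 1 ⊕ Fin r))} {j : Fin r}
    (he : e ∈ (G ⊕g completeBipartiteGraph (Fin 1) (Fin r)).edgeSet)
    (hj : Sum.inr (Sum.inr j) ∈ e) : e = sedge V r j := by
  rcases edge_classify G he with ⟨f, _, rfl⟩ | ⟨j', rfl⟩
  · rw [Sym2.mem_map] at hj; obtain ⟨a, -, h⟩ := hj; simp at h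
  · rw [sedge, Sym2.mem_iff] at hj
    rcases hj with h | h <;> simp_all [sedge]

lemma center_mem (G : SimpleGraph V) {r : ℕ} {e : Sym2 (V ⊕ (Fin 1 ⊕ Fin r))}
    (he : e ∈ (G ⊕g completeBipartiteGraph (Fin 1) (Fin r)).edgeSet)
    (hc : Sum.inr (Sum.inl 0) ∈ e) : ∃ j, e = sedge V r j := by
  rcases edge_classify G he with ⟨f, _, rfl⟩ | h
  · rw [Sym2.mem_map] at hc; obtain ⟨a, -, h⟩ := hc; simp at h
  · exact h

lemma inl_mem (G : SimpleGraph V) {r : ℕ} {e : Sym2 (V ⊕ (Fin 1 ⊕ Fin r))} {u : V}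
    (he : e ∈ (G ⊕g completeBipartiteGraph (Fin 1) (Fin r)).edgeSet)
    (hu : Sum.inl u ∈ e) : ∃ f ∈ G.edgeSet, e = Sym2.map Sum.inl f ∧ u ∈ f := by
  rcases edge_classify G he with ⟨f, hf, rfl⟩ | ⟨j, rfl⟩
  · rw [Sym2.mem_map] at hu
    obtain ⟨a, ha, h⟩ := hu
    rw [Sum.inl.injEq] at h
    exact ⟨f, hf, rfl, h ▸ ha⟩
  · rw [sedge, Sym2.mem_iff] at hu; rcases hu with h | h <;> simp at h

/-- Every regular partition of `G ⊕g K_{1,r}` has an injective family of part indices, one per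
star edge, with each such part `1`-regular. -/
lemma parts_structure (G : SimpleGraph V) {r t : ℕ}
    {P : Fin t → Set (Sym2 (V ⊕ (Fin 1 ⊕ Fin r)))}
    (hP : IsRegularPartition (G ⊕g completeBipartiteGraph (Fin 1) (Fin r)) P) :
    ∃ idx : Fin r → Fin t, Function.Injective idx ∧
      ∀ j, sedge V r j ∈ P (idx j) ∧ IsRegularEdgeSet (P (idx j)) 1 := by
  obtain ⟨hne, hdisj, huni, hregp⟩ := hP
  have hsub : ∀ i, P i ⊆ (G ⊕g completeBipartiteGraph (Fin 1) (Fin r)).edgeSet := by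
    intro i; rw [← huni]; exact Set.subset_iUnion P i
  have hex : ∀ j : Fin r, ∃ i, sedge V r j ∈ P i := by
    intro j
    have := (huni ▸ sedge_mem G j : sedge V r j ∈ ⋃ i, P i)
    exact Set.mem_iUnion.mp this
  choose idx hidx using hex
  have hone : ∀ j, IsRegularEdgeSet (P (idx j)) 1 := by
    intro j
    obtain ⟨d, hd⟩ := hregp (idx j)
    have hleaf : Sum.inr (Sum.inr j) ∈ sedge V r j := by rw [sedge]; simp
    have h1 : edgeDeg (P (idx j)) (Sum.inr (Sum.inr j)) = 1 :=
      edgeDeg_eq_one (hidx j) hleaf (fun e he hve => leaf_unique G (hsub _ he) hve)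
    have hd1 : d = 1 := by
      rw [← h1]; exact (hd _ ⟨sedge V r j, hidx j, hleaf⟩).symm
    exact hd1 ▸ hd
  refine ⟨idx, ?_, fun j => ⟨hidx j, hone j⟩⟩
  intro j j' h
  have hcj : Sum.inr (Sum.inl 0) ∈ sedge V r j := by rw [sedge]; simp
  have hcj' : Sum.inr (Sum.inl 0) ∈ sedge V r j' := by rw [sedge]; simp
  have hdeg : edgeDeg (P (idx j)) (Sum.inr (Sum.inl (0 : Fin 1))) = 1 :=
    hone j _ ⟨sedge V r j, hidx j, hcj⟩
  exact sedge_inj (edgeDeg_one_unique hdeg (hidx j) (h ▸ hidx j') hcj hcj')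

lemma lower_bound (G : SimpleGraph V) {r t : ℕ}
    {P : Fin t → Set (Sym2 (V ⊕ (Fin 1 ⊕ Fin r)))}
    (hP : IsRegularPartition (G ⊕g completeBipartiteGraph (Fin 1) (Fin r)) P) : r ≤ t := by
  obtain ⟨idx, hinj, -⟩ := parts_structure G hP
  simpa using Fintype.card_le_of_injective idx hinj

lemma coloring_of_partition (G : SimpleGraph V) {r : ℕ} (hr : 0 < r)
    {P : Fin r → Set (Sym2 (V ⊕ (Fin 1 ⊕ Fin r)))}
    (hP : IsRegularPartition (G ⊕g completeBipartiteGraph (Fin 1) (Fin r)) P) :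
    ∃ C : Sym2 V → Fin r, IsProperEdgeColoring G C := by
  classical
  obtain ⟨idx, hinj, hstar⟩ := parts_structure G hP
  have hsurj : Function.Surjective idx := Finite.surjective_of_injective hinj
  have hone : ∀ i, IsRegularEdgeSet (P i) 1 := by
    intro i; obtain ⟨j, rfl⟩ := hsurj i; exact (hstar j).2
  obtain ⟨hne, hdisj, huni, -⟩ := hP
  have hex : ∀ f : Sym2 V, f ∈ G.edgeSet → ∃ i, Sym2.map Sum.inl f ∈ P i := by
    intro f hf
    exact Set.mem_iUnion.mp (huni ▸ map_inl_mem G hf)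
  refine ⟨fun f => if h : ∃ i, Sym2.map Sum.inl f ∈ P i then h.choose else ⟨0, hr⟩, ?_⟩
  intro e₁ h₁ e₂ h₂ hne12 ⟨x, hx₁, hx₂⟩ hCeq
  dsimp only at hCeq
  rw [dif_pos (hex e₁ h₁), dif_pos (hex e₂ h₂)] at hCeq
  have m₁ := (hex e₁ h₁).choose_spec
  have m₂ := (hex e₂ h₂).choose_spec
  rw [hCeq] at m₁
  set i := (hex e₂ h₂).choose
  have hx₁' : (Sum.inl x : V ⊕ (Fin 1 ⊕ Fin r)) ∈ Sym2.map Sum.inl e₁ :=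
    Sym2.mem_map.mpr ⟨x, hx₁, rfl⟩
  have hx₂' : (Sum.inl x : V ⊕ (Fin 1 ⊕ Fin r)) ∈ Sym2.map Sum.inl e₂ :=
    Sym2.mem_map.mpr ⟨x, hx₂, rfl⟩
  have hdeg : edgeDeg (P i) (Sum.inl x) = 1 :=
    hone i _ ⟨_, m₁, hx₁'⟩
  have := edgeDeg_one_unique hdeg m₁ m₂ hx₁' hx₂'
  exact hne12 (Sym2.map.injective Sum.inl_injective this)

lemma partition_of_coloring (G : SimpleGraph V) {r : ℕ}
    {C : Sym2 V → Fin r} (hC : IsProperEdgeColoring G C) :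
    ∃ P : Fin r → Set (Sym2 (V ⊕ (Fin 1 ⊕ Fin r))),
      IsRegularPartition (G ⊕g completeBipartiteGraph (Fin 1) (Fin r)) P := by
  refine ⟨fun i => insert (sedge V r i) (Sym2.map Sum.inl '' {f ∈ G.edgeSet | C f = i}),
    fun i => ⟨sedge V r i, Set.mem_insert _ _⟩, ?_, ?_, ?_⟩
  · -- disjoint
    intro i j hij
    rw [Set.disjoint_left]
    have hnotstar : ∀ (g : Sym2 V) (k : Fin r),
        Sym2.map (Sum.inl : V → V ⊕ (Fin 1 ⊕ Fin r)) g ≠ sedge V r k := by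
      intro g k h
      have : (Sum.inr (Sum.inl (0 : Fin 1)) : V ⊕ (Fin 1 ⊕ Fin r)) ∈
          Sym2.map (Sum.inl : V → V ⊕ (Fin 1 ⊕ Fin r)) g := by
        rw [h, sedge]; simp
      rw [Sym2.mem_map] at this
      obtain ⟨a, -, hh⟩ := this; simp at hh
    rintro e (rfl | ⟨f, ⟨hf, hfC⟩, rfl⟩) he
    · rcases he with h | ⟨g, ⟨hg, hgC⟩, h⟩
      · exact hij (sedge_inj h)
      · exact hnotstar g i h
    · rcases he with h | ⟨g, ⟨hg, hgC⟩, h⟩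
      · exact hnotstar f j h
      · have hgf : g = f := Sym2.map.injective Sum.inl_injective h
        subst hgf
        exact hij (hfC ▸ hgC ▸ rfl)
  · -- union
    ext e
    simp only [Set.mem_iUnion]
    constructor
    · rintro ⟨i, rfl | ⟨f, ⟨hf, -⟩, rfl⟩⟩
      · exact sedge_mem G i
      · exact map_inl_mem G hf
    · intro he
      rcases edge_classify G he with ⟨f, hf, rfl⟩ | ⟨j, rfl⟩
      · exact ⟨C f, Set.mem_insert_of_mem _ ⟨f, ⟨hf, rfl⟩, rfl⟩⟩
      · exact ⟨j, Set.mem_insert _ _⟩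
  · -- each part 1-regular
    intro i
    refine ⟨1, fun v ⟨e₀, he₀, hv₀⟩ => edgeDeg_eq_one he₀ hv₀ ?_⟩
    have key : ∀ e₁ ∈ insert (sedge V r i) (Sym2.map Sum.inl '' {f ∈ G.edgeSet | C f = i}),
        ∀ e₂ ∈ insert (sedge V r i) (Sym2.map Sum.inl '' {f ∈ G.edgeSet | C f = i}),
        v ∈ e₁ → v ∈ e₂ → e₁ = e₂ := by
      rintro e₁ (rfl | ⟨f₁, ⟨hf₁, hc₁⟩, rfl⟩) e₂ (rfl | ⟨f₂, ⟨hf₂, hc₂⟩, rfl⟩) hv₁ hv₂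
      · rfl
      · rw [sedge, Sym2.mem_iff] at hv₁
        rw [Sym2.mem_map] at hv₂
        obtain ⟨a, -, rfl⟩ := hv₂
        rcases hv₁ with h | h <;> simp at h
      · rw [sedge, Sym2.mem_iff] at hv₂
        rw [Sym2.mem_map] at hv₁
        obtain ⟨a, -, rfl⟩ := hv₁
        rcases hv₂ with h | h <;> simp at h
      · rw [Sym2.mem_map] at hv₁ hv₂
        obtain ⟨a₁, ha₁, hh₁⟩ := hv₁
        obtain ⟨a₂, ha₂, hh₂⟩ := hv₂
        rw [← hh₂, Sum.inl.injEq] at hh₁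
        subst hh₁
        by_contra hne
        have hfne : f₁ ≠ f₂ := fun h => hne (h ▸ rfl)
        exact hC f₁ hf₁ f₂ hf₂ hfne ⟨a₁, ha₁, ha₂⟩ (hc₁.trans hc₂.symm)
    exact fun e he hve => key e he e₀ he₀ hve hv₀

lemma degree_eq_ncard {W : Type*} [Fintype W] (H : SimpleGraph W) (inst : DecidableRel H.Adj)
    (v : W) : @SimpleGraph.degree _ H v (@SimpleGraph.neighborSetFintype _ H _ inst v) =
      (H.neighborSet v).ncard := by
  rw [SimpleGraph.degree, SimpleGraph.neighborFinset, Set.ncard_eq_toFinset_card']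

set_option maxHeartbeats 1000000 in
lemma maxDegree_sum (G : SimpleGraph V) [Fintype V] [DecidableRel G.Adj] {r : ℕ} (hr : 3 ≤ r)
    (hreg : G.IsRegularOfDegree r)
    (inst : DecidableRel (G ⊕g completeBipartiteGraph (Fin 1) (Fin r)).Adj) :
    @SimpleGraph.maxDegree _ (G ⊕g completeBipartiteGraph (Fin 1) (Fin r)) _ inst = r := by
  have hdeg : ∀ v, @SimpleGraph.degree _ (G ⊕g completeBipartiteGraph (Fin 1) (Fin r)) v (@SimpleGraph.neighborSetFintype _ (G ⊕g completeBipartiteGraph (Fin 1) (Fin r)) _ inst v) =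
      ((G ⊕g completeBipartiteGraph (Fin 1) (Fin r)).neighborSet v).ncard := degree_eq_ncard (G ⊕g completeBipartiteGraph (Fin 1) (Fin r)) inst
  have hinl : ∀ u : V, ((G ⊕g completeBipartiteGraph (Fin 1) (Fin r)).neighborSet (Sum.inl u)).ncard = r := by
    intro u
    have : (G ⊕g completeBipartiteGraph (Fin 1) (Fin r)).neighborSet (Sum.inl u) = Sum.inl '' G.neighborSet u := by
      ext w
      cases w with
      | inl w => simp [SimpleGraph.sum , SimpleGraph.neighborSet]
      | inr w => simp [SimpleGraph.sum , SimpleGraph.neighborSet]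
    rw [this, Set.ncard_image_of_injective _ Sum.inl_injective,
      ← degree_eq_ncard G ‹_›, hreg u]
  have hcenter : ((G ⊕g completeBipartiteGraph (Fin 1) (Fin r)).neighborSet (Sum.inr (Sum.inl (0 : Fin 1)))).ncard = r := by
    have : (G ⊕g completeBipartiteGraph (Fin 1) (Fin r)).neighborSet (Sum.inr (Sum.inl 0)) =
        (fun j : Fin r => (Sum.inr (Sum.inr j) : V ⊕ (Fin 1 ⊕ Fin r))) '' Set.univ := by
      ext w
      cases w with
      | inl w => simp [SimpleGraph.sum , SimpleGraph.neighborSet]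
      | inr w =>
        cases w with
        | inl w => simp [SimpleGraph.sum , SimpleGraph.neighborSet]
        | inr w => simp [SimpleGraph.sum , SimpleGraph.neighborSet]
    rw [this, Set.ncard_image_of_injective _ (fun a b h => by simpa using h), Set.ncard_univ,
      Nat.card_eq_fintype_card, Fintype.card_fin]
  have hleaf : ∀ j : Fin r, ((G ⊕g completeBipartiteGraph (Fin 1) (Fin r)).neighborSet (Sum.inr (Sum.inr j))).ncard = 1 := by
    intro j
    have : (G ⊕g completeBipartiteGraph (Fin 1) (Fin r)).neighborSet (Sum.inr (Sum.inr j)) =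
        {(Sum.inr (Sum.inl 0) : V ⊕ (Fin 1 ⊕ Fin r))} := by
      ext w
      cases w with
      | inl w => simp [SimpleGraph.sum , SimpleGraph.neighborSet]
      | inr w =>
        cases w with
        | inl w => simp [SimpleGraph.sum, SimpleGraph.neighborSet, Fin.fin_one_eq_zero w]
        | inr w => simp [SimpleGraph.sum , SimpleGraph.neighborSet]
    rw [this, Set.ncard_singleton]
  apply le_antisymm
  · refine @SimpleGraph.maxDegree_le_of_forall_degree_le _ (G ⊕g completeBipartiteGraph (Fin 1) (Fin r)) _ inst r ?_
    intro v
    rw [hdeg v]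
    match v with
    | Sum.inl u => rw [hinl u]
    | Sum.inr (Sum.inl x) => rw [Fin.fin_one_eq_zero x, hcenter]
    | Sum.inr (Sum.inr j) => rw [hleaf j]; omega
  · have := @SimpleGraph.degree_le_maxDegree _ (G ⊕g completeBipartiteGraph (Fin 1) (Fin r)) _ inst (Sum.inr (Sum.inl 0))
    rwa [hdeg, hcenter] at this

lemma maxDegree_le_of_coloring [Fintype V] (G : SimpleGraph V) [DecidableRel G.Adj]
    {n : ℕ} (C : Sym2 V → Fin n) (hC : IsProperEdgeColoring G C) : G.maxDegree ≤ n := by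
  classical
  apply SimpleGraph.maxDegree_le_of_forall_degree_le
  intro v
  rw [← SimpleGraph.card_incidenceFinset_eq_degree]
  have hinj : Set.InjOn C (G.incidenceFinset v : Set (Sym2 V)) := by
    intro e₁ h₁ e₂ h₂ heq
    rw [Finset.mem_coe, SimpleGraph.mem_incidenceFinset] at h₁ h₂
    by_contra hne
    exact hC e₁ h₁.1 e₂ h₂.1 hne ⟨v, h₁.2, h₂.2⟩ heq
  calc (G.incidenceFinset v).card ≤ (Finset.univ : Finset (Fin n)).card :=
        Finset.card_le_card_of_injOn C (fun e _ => Finset.mem_univ (C e)) hinj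
    _ = n := by simp

lemma coloring_exists [Fintype V] (G : SimpleGraph V) :
    ∃ n, ∃ C : Sym2 V → Fin n, IsProperEdgeColoring G C := by
  classical
  exact ⟨Fintype.card (Sym2 V), Fintype.equivFin (Sym2 V),
    fun e₁ _ e₂ _ hne _ h => hne (Equiv.injective _ h)⟩

lemma maxDegree_reg [Fintype V] (G : SimpleGraph V) [DecidableRel G.Adj] [Nonempty V] {r : ℕ}
    (hreg : G.IsRegularOfDegree r) : G.maxDegree = r := by
  apply le_antisymm
  · exact G.maxDegree_le_of_forall_degree_le r (fun v => (hreg v).le)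
  · exact hreg (Classical.arbitrary V) ▸ SimpleGraph.degree_le_maxDegree _ _


/-- for `r ≥ 3` and an `r`-regular graph `G`, the disjoint union `G'` of `G`
and the star `K_{1,r}` satisfies `reg(G') = Δ(G')` iff `χ'(G) = Δ(G)`; that is,
`reg(G') = r` iff `G` has a proper edge coloring with `r` colors. -/
theorem regNum_disjUnion_star [Fintype V] (G : SimpleGraph V) [DecidableRel G.Adj]
    (r : ℕ) (hr : 3 ≤ r) (hreg : G.IsRegularOfDegree r)
    (G' : SimpleGraph (V ⊕ (Fin 1 ⊕ Fin r)))
    (hG' : G' = G ⊕g completeBipartiteGraph (Fin 1) (Fin r)) :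
    (regNum G' = @SimpleGraph.maxDegree _ G' _ (Classical.decRel _) ↔
      edgeChromNum G = G.maxDegree) ∧
    (regNum G' = r ↔ ∃ C : Sym2 V → Fin r, IsProperEdgeColoring G C) := by
  subst hG'
  have key : regNum (G ⊕g completeBipartiteGraph (Fin 1) (Fin r)) = r ↔
      ∃ C : Sym2 V → Fin r, IsProperEdgeColoring G C := by
    constructor
    · intro h
      have hSne : {t | ∃ P : Fin t → Set (Sym2 (V ⊕ (Fin 1 ⊕ Fin r))),
          IsRegularPartition (G ⊕g completeBipartiteGraph (Fin 1) (Fin r)) P}.Nonempty := by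
        by_contra hc
        rw [Set.not_nonempty_iff_eq_empty] at hc
        rw [regNum, hc, Nat.sInf_empty] at h
        omega
      have hmem := Nat.sInf_mem hSne
      rw [show sInf _ = regNum (G ⊕g completeBipartiteGraph (Fin 1) (Fin r)) from rfl, h] at hmem
      obtain ⟨P, hP⟩ := hmem
      exact coloring_of_partition G (by omega) hP
    · rintro ⟨C, hC⟩
      obtain ⟨P, hP⟩ := partition_of_coloring G hC
      have hub : regNum (G ⊕g completeBipartiteGraph (Fin 1) (Fin r)) ≤ r :=
        Nat.sInf_le ⟨P, hP⟩
      have hSne : {t | ∃ P : Fin t → Set (Sym2 (V ⊕ (Fin 1 ⊕ Fin r))),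
          IsRegularPartition (G ⊕g completeBipartiteGraph (Fin 1) (Fin r)) P}.Nonempty :=
        ⟨r, P, hP⟩
      obtain ⟨P', hP'⟩ := Nat.sInf_mem hSne
      exact le_antisymm hub (lower_bound G hP')
  refine ⟨?_, key⟩
  rw [maxDegree_sum G hr hreg _, key]
  by_cases hV : Nonempty V
  · have hΔ : G.maxDegree = r := maxDegree_reg G hreg
    rw [hΔ]
    obtain ⟨C₀, hC₀⟩ := Nat.sInf_mem (coloring_exists G)
    constructor
    · rintro ⟨C, hC⟩
      refine le_antisymm (Nat.sInf_le ⟨C, hC⟩) ?_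
      exact hΔ ▸ maxDegree_le_of_coloring G C₀ hC₀
    · intro h
      have hle : edgeChromNum G ≤ r := h.le
      exact ⟨fun e => Fin.castLE hle (C₀ e),
        fun e₁ h₁ e₂ h₂ hne hx heq =>
          hC₀ e₁ h₁ e₂ h₂ hne hx (Fin.castLE_injective hle heq)⟩
  · have hVe : IsEmpty V := not_nonempty_iff.mp hV
    have hSym : IsEmpty (Sym2 V) := by
      constructor
      intro e
      induction e with
      | _ a b => exact hVe.false a
    have hEC : edgeChromNum G = 0 := by
      have : (0 : ℕ) ∈ {n | ∃ C : Sym2 V → Fin n, IsProperEdgeColoring G C} :=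
        ⟨fun e => (hSym.false e).elim, fun e₁ _ _ _ _ _ _ => (hSym.false e₁).elim⟩
      exact Nat.le_zero.mp (Nat.sInf_le this)
    have hMD : G.maxDegree = 0 :=
      Nat.le_zero.mp (G.maxDegree_le_of_forall_degree_le 0
        (fun v => (hVe.false v).elim))
    simp only [hEC, hMD]
    exact ⟨fun _ => trivial, fun _ => ⟨fun e => (hSym.false e).elim,
      fun e₁ _ _ _ _ _ _ => (hSym.false e₁).elim⟩⟩
end

section
/- Let n ≥ 1 and k ≥ 1 be integers and a_1, …, a_{3n} positive integers with k/4 < a_i < k/2 for each i and a_1 + ⋯ + a_{3n} = nk. Construct the graph G = G_{A,k} as follows: take 3n pairwise disjoint copies K^(1), …, K^(3n) of the complete bipartite graph K_{2k,2k−1}, and in K^(i) let X^(i) denote the part of size 2k; add three new vertices u, v, w; for each i, partition X^(i) into three sets of sizes 2a_i, k − a_i, and k − a_i, and join every vertex of the first set to u, every vertex of the second set to v, and every vertex of the third set to w. Then reg(G_{A,k}) ≤ n if and only if {a_1, …, a_{3n}} can be partitioned into n disjoint sets A_1, …, A_n with Σ_{a ∈ A_j} a = k for every j. -/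
open SimpleGraph

variable {V : Type*}

/-- The graph `G_{A,k}`: `3n` disjoint copies of the complete bipartite graph `K_{2k,2k-1}`
(copy `i` has parts `Fin (2k)` and `Fin (2k-1)`), together with three extra vertices
`u = 2`... namely `Sum.inr 0 = u`, `Sum.inr 1 = v`, `Sum.inr 2 = w`; the vertex `x` of the
part `X⁽ⁱ⁾ = Fin (2k)` of copy `i` is joined to the extra vertex `σ i x`. -/
def gadgetGraph (n k : ℕ) (σ : Fin (3 * n) → Fin (2 * k) → Fin 3) :
    SimpleGraph ((Fin (3 * n) × (Fin (2 * k) ⊕ Fin (2 * k - 1))) ⊕ Fin 3) :=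
  SimpleGraph.fromRel (fun p q =>
    match p, q with
    | Sum.inl (i, Sum.inl _), Sum.inl (j, Sum.inr _) => i = j
    | Sum.inl (i, Sum.inl x), Sum.inr c => σ i x = c
    | _, _ => False)

/-! Every vertex of a copy of `K_{2k,2k-1}` has degree `2k`, while each hub has degree `2nk`.
In a regular partition, a part is `r`-regular with `r ≤ 2k`, because each edge has an endpoint of
degree `2k`; counting the edges at the hub `u` then forces exactly `n` parts, each `2k`-regular
and meeting `u` in `2k` edges. A `2k`-regular part that reaches a vertex of degree `2k` contains
all of its edges, so every copy lies in a single part, together with its edges to the hubs. The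
part containing copy `i` meets `u` in `2 a_i` edges, so the copies in a part have `a_i` summing
to `k`. Conversely, given a 3-partition, put each copy, together with its edges to the hubs, into
the part of its group. A group summing to `k` with `k/4 < a_i < k/2` has exactly three elements,
so each hub meets that part in `2k` edges.
-/

open Finset
open scoped Function

section EdgeDeg

variable {V : Type*}

lemma edgeDeg_eq_ncard_setOf (F : Set (Sym2 V)) (v : V) :
    edgeDeg F v = {w | s(v, w) ∈ F}.ncard := by
  have : {e ∈ F | v ∈ e} = (fun w => s(v, w)) '' {w | s(v, w) ∈ F} := by
    ext e
    constructor
    · rintro ⟨heF, hv⟩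
      obtain ⟨w, rfl⟩ := Sym2.mem_iff_exists.1 hv
      exact ⟨w, heF, rfl⟩
    · rintro ⟨w, hw, rfl⟩
      exact ⟨hw, Sym2.mem_mk_left v w⟩
  rw [edgeDeg, this, Set.ncard_image_of_injective _ fun _ _ => Sym2.congr_right.mp]

variable [Finite V]

lemma edgeDeg_mono {F F' : Set (Sym2 V)} (h : F ⊆ F') (v : V) : edgeDeg F v ≤ edgeDeg F' v :=
  Set.ncard_le_ncard (fun _ he => ⟨h he.1, he.2⟩)

lemma edgeDeg_pos_iff {F : Set (Sym2 V)} {v : V} : 0 < edgeDeg F v ↔ ∃ e ∈ F, v ∈ e :=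
  Set.ncard_pos

lemma edgeDeg_iUnion {t : ℕ} {P : Fin t → Set (Sym2 V)} (hP : Pairwise (Disjoint on P))
    (v : V) :
    edgeDeg (⋃ j, P j) v = ∑ j, edgeDeg (P j) v := by
  have : {e ∈ ⋃ j, P j | v ∈ e} = ⋃ j, {e ∈ P j | v ∈ e} := by
    ext e
    simp only [Set.mem_ofPred_eq, Set.mem_iUnion, exists_and_right]
  rw [edgeDeg, this, Set.ncard_iUnion_of_finite (fun _ => Set.toFinite _)
    (fun i j hij => (hP hij).mono (Set.sep_subset _ _) (Set.sep_subset _ _)),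
    finsum_eq_sum_of_fintype]
  rfl

lemma IsRegularEdgeSet.mem_of_edgeDeg_eq {F F' : Set (Sym2 V)} {r : ℕ}
    (hF : IsRegularEdgeSet F r) (hFF' : F ⊆ F') {v : V} (hv : ∃ e ∈ F, v ∈ e)
    (hdeg : edgeDeg F' v = r) {e : Sym2 V} (he : e ∈ F') (hve : v ∈ e) : e ∈ F := by
  have : {e ∈ F | v ∈ e} = {e ∈ F' | v ∈ e} :=
    Set.eq_of_subset_of_ncard_le (fun _ he => ⟨hFF' he.1, he.2⟩)
      (by rw [← edgeDeg, ← edgeDeg, hdeg, hF v hv])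
  exact (this.symm ▸ ⟨he, hve⟩ : e ∈ {e ∈ F | v ∈ e}).1

end EdgeDeg

namespace IsRegularPartition

variable {V : Type*} {G : SimpleGraph V} {t : ℕ} {P : Fin t → Set (Sym2 V)}

lemma subset_edgeSet (hP : IsRegularPartition G P) (j : Fin t) : P j ⊆ G.edgeSet :=
  hP.2.2.1 ▸ Set.subset_iUnion P j

lemma regNum_le (hP : IsRegularPartition G P) : regNum G ≤ t :=
  Nat.sInf_le ⟨P, hP⟩

variable [Finite V]

lemma sum_edgeDeg (hP : IsRegularPartition G P) (v : V) :
    ∑ j, edgeDeg (P j) v = edgeDeg G.edgeSet v := by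
  rw [← hP.2.2.1, edgeDeg_iUnion hP.2.1]

lemma exists_isRegularEdgeSet_le (hP : IsRegularPartition G P) {Δ : ℕ}
    (hΔ : ∀ e ∈ G.edgeSet, ∃ v ∈ e, edgeDeg G.edgeSet v ≤ Δ) (j : Fin t) :
    ∃ r ≤ Δ, IsRegularEdgeSet (P j) r := by
  obtain ⟨r, hr⟩ := hP.2.2.2 j
  obtain ⟨e, he⟩ := hP.1 j
  obtain ⟨v, hve, hv⟩ := hΔ e (hP.subset_edgeSet j he)
  refine ⟨r, ?_, hr⟩
  calc r = edgeDeg (P j) v := (hr v ⟨e, he, hve⟩).symm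
    _ ≤ edgeDeg G.edgeSet v := edgeDeg_mono (hP.subset_edgeSet j) v
    _ ≤ Δ := hv

/-- Each part meets `u` in at most `Δ` edges, and these numbers add up to `n * Δ`. -/
lemma eq_of_edgeDeg_eq_mul (hP : IsRegularPartition G P) {n Δ : ℕ} (htn : t ≤ n)
    (hΔ : 0 < Δ) (hreg : ∀ j, ∃ r ≤ Δ, IsRegularEdgeSet (P j) r) {u : V}
    (hu : edgeDeg G.edgeSet u = n * Δ) :
    t = n ∧ ∀ j, edgeDeg (P j) u = Δ ∧ IsRegularEdgeSet (P j) Δ := by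
  have hle (j : Fin t) : edgeDeg (P j) u ≤ Δ := by
    obtain ⟨r, hrΔ, hr⟩ := hreg j
    by_cases hu : ∃ e ∈ P j, u ∈ e
    · exact hr u hu ▸ hrΔ
    · rw [← edgeDeg_pos_iff, not_lt, Nat.le_zero] at hu
      omega
  have hsum : ∑ j, edgeDeg (P j) u = n * Δ := hP.sum_edgeDeg u ▸ hu
  have hnt : n * Δ ≤ t * Δ := by
    simpa [hsum] using sum_le_sum fun j (_ : j ∈ univ) => hle j
  have htn : t = n := le_antisymm htn (Nat.le_of_mul_le_mul_right hnt hΔ)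
  subst htn
  have hdeg (j : Fin t) : edgeDeg (P j) u = Δ := by
    have := (sum_eq_sum_iff_of_le fun j (_ : j ∈ univ) => hle j).1 (by simpa using hsum)
    exact this j (mem_univ j)
  refine ⟨rfl, fun j => ⟨hdeg j, ?_⟩⟩
  obtain ⟨r, -, hr⟩ := hreg j
  have hu : ∃ e ∈ P j, u ∈ e := edgeDeg_pos_iff.1 (hdeg j ▸ hΔ)
  exact hdeg j ▸ hr u hu ▸ hr

end IsRegularPartition

lemma exists_isRegularPartition {V : Type*} [Finite V] (G : SimpleGraph V) :
    ∃ t, ∃ P : Fin t → Set (Sym2 V), IsRegularPartition G P := by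
  let E := Finite.equivFin G.edgeSet
  refine ⟨_, fun i => {(E.symm i : Sym2 V)}, fun i => Set.singleton_nonempty _, ?_, ?_,
    fun i => ⟨1, ?_⟩⟩
  · exact fun i j hij => Set.disjoint_singleton.2 fun h => hij (E.symm.injective (Subtype.ext h))
  · ext e
    simp only [Set.mem_iUnion, Set.mem_singleton_iff]
    exact ⟨fun ⟨i, hi⟩ => hi ▸ (E.symm i).2,
      fun he => ⟨E ⟨e, he⟩, by rw [Equiv.symm_apply_apply]⟩⟩
  · rintro v ⟨e, rfl, hve⟩
    rw [edgeDeg, Set.sep_eq_self_iff_mem_true.2 (by simpa using hve), Set.ncard_singleton]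

lemma exists_isRegularPartition_of_regNum_le {V : Type*} [Finite V] {G : SimpleGraph V} {n : ℕ}
    (h : regNum G ≤ n) : ∃ t ≤ n, ∃ P : Fin t → Set (Sym2 V), IsRegularPartition G P :=
  ⟨_, h, Nat.sInf_mem (exists_isRegularPartition G)⟩

section ThreePartition

variable {ι : Type*} {a : ι → ℕ} {k : ℕ} {s : Finset ι}

lemma card_eq_three_of_sum_eq (hk : 0 < k) (ha : ∀ i ∈ s, k < 4 * a i ∧ 2 * a i < k)
    (hs : ∑ i ∈ s, a i = k) : #s = 3 := by
  have hne : s.Nonempty := by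
    rw [nonempty_iff_ne_empty]
    rintro rfl
    rw [sum_empty] at hs
    omega
  have h4 : #s * k < 4 * k := by
    simpa [← mul_sum, hs] using sum_lt_sum_of_nonempty hne fun i hi => (ha i hi).1
  have h2 : 2 * k < #s * k := by
    simpa [← mul_sum, hs] using sum_lt_sum_of_nonempty hne fun i hi => (ha i hi).2
  have := Nat.lt_of_mul_lt_mul_right h4
  have := Nat.lt_of_mul_lt_mul_right h2
  omega

lemma sum_sub_eq_two_mul (hk : 0 < k) (ha : ∀ i ∈ s, k < 4 * a i ∧ 2 * a i < k)
    (hs : ∑ i ∈ s, a i = k) : ∑ i ∈ s, (k - a i) = 2 * k := by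
  rw [sum_tsub_distrib s fun i hi => by have := (ha i hi).2; omega, sum_const,
    card_eq_three_of_sum_eq hk ha hs, hs, smul_eq_mul]
  omega

end ThreePartition

namespace Gadget

variable {n k : ℕ} {σ : Fin (3 * n) → Fin (2 * k) → Fin 3}

abbrev Vert (n k : ℕ) := (Fin (3 * n) × (Fin (2 * k) ⊕ Fin (2 * k - 1))) ⊕ Fin 3

abbrev xv (i : Fin (3 * n)) (x : Fin (2 * k)) : Vert n k := Sum.inl (i, Sum.inl x)

abbrev yv (i : Fin (3 * n)) (y : Fin (2 * k - 1)) : Vert n k := Sum.inl (i, Sum.inr y)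

abbrev hub (c : Fin 3) : Vert n k := Sum.inr c

lemma neighborSet_xv (i : Fin (3 * n)) (x : Fin (2 * k)) :
    {w | (gadgetGraph n k σ).Adj (xv i x) w} = Set.range (yv i) ∪ {hub (σ i x)} := by
  ext (⟨j, x' | y'⟩ | c) <;> simp [gadgetGraph, eq_comm]

lemma neighborSet_yv (i : Fin (3 * n)) (y : Fin (2 * k - 1)) :
    {w | (gadgetGraph n k σ).Adj (yv i y) w} = Set.range (xv i) := by
  ext (⟨j, x' | y'⟩ | c) <;> simp [gadgetGraph, eq_comm]

lemma neighborSet_hub (c : Fin 3) :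
    {w | (gadgetGraph n k σ).Adj (hub c) w} = {w | ∃ i x, σ i x = c ∧ w = xv i x} := by
  ext (⟨j, x' | y'⟩ | c) <;> simp [gadgetGraph, eq_comm]

lemma ncard_setOf_xv (R : Fin (3 * n) → Fin (2 * k) → Prop) [∀ i, DecidablePred (R i)] :
    {w : Vert n k | ∃ i x, R i x ∧ w = xv i x}.ncard = ∑ i, #{x | R i x} := by
  have : {w : Vert n k | ∃ i x, R i x ∧ w = xv i x}
      = (fun p : (_ : Fin (3 * n)) × Fin (2 * k) => xv p.1 p.2) ''
          ↑(univ.sigma fun i => ({x | R i x} : Finset _)) := by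
    ext w
    simp [eq_comm]
  rw [this, Set.ncard_image_of_injective _ fun p q h => by simpa [Sigma.ext_iff] using h,
    Set.ncard_coe_finset, card_sigma]

lemma edgeDeg_inl (hk : 1 ≤ k) (i : Fin (3 * n)) (p : Fin (2 * k) ⊕ Fin (2 * k - 1)) :
    edgeDeg (gadgetGraph n k σ).edgeSet (Sum.inl (i, p)) = 2 * k := by
  rw [edgeDeg_eq_ncard_setOf]
  rcases p with x | y
  · change {w | (gadgetGraph n k σ).Adj (xv i x) w}.ncard = _
    rw [neighborSet_xv, Set.ncard_union_eq (by simp), Set.ncard_range_of_injective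
      (fun _ _ h => by simpa using h), Set.ncard_singleton, Nat.card_eq_fintype_card,
      Fintype.card_fin]
    omega
  · change {w | (gadgetGraph n k σ).Adj (yv i y) w}.ncard = _
    rw [neighborSet_yv, Set.ncard_range_of_injective (fun _ _ h => by simpa using h),
      Nat.card_eq_fintype_card, Fintype.card_fin]

lemma edgeDeg_hub (c : Fin 3) :
    edgeDeg (gadgetGraph n k σ).edgeSet (hub c) = ∑ i, #{x | σ i x = c} := by
  rw [edgeDeg_eq_ncard_setOf]
  exact (congrArg Set.ncard (neighborSet_hub c)).trans (ncard_setOf_xv _)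

lemma exists_xv_mem {e : Sym2 (Vert n k)} (he : e ∈ (gadgetGraph n k σ).edgeSet) :
    ∃ i x, xv i x ∈ e := by
  induction e with
  | h a b =>
  rcases a with ⟨i, x | y⟩ | c
  · exact ⟨i, x, Sym2.mem_mk_left _ _⟩
  · have hb : b ∈ {w | (gadgetGraph n k σ).Adj (yv i y) w} := he
    obtain ⟨x, rfl⟩ := neighborSet_yv (σ := σ) i y ▸ hb
    exact ⟨i, x, Sym2.mem_mk_right _ _⟩
  · have hb : b ∈ {w | (gadgetGraph n k σ).Adj (hub c) w} := he
    obtain ⟨i, x, -, rfl⟩ := neighborSet_hub (σ := σ) c ▸ hb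
    exact ⟨i, x, Sym2.mem_mk_right _ _⟩

lemma eq_of_inl_mem {e : Sym2 (Vert n k)} (he : e ∈ (gadgetGraph n k σ).edgeSet)
    {i i' : Fin (3 * n)} {p p' : Fin (2 * k) ⊕ Fin (2 * k - 1)}
    (h : Sum.inl (i, p) ∈ e) (h' : Sum.inl (i', p') ∈ e) : i = i' := by
  by_cases hne : (Sum.inl (i, p) : Vert n k) = Sum.inl (i', p')
  · exact (Prod.ext_iff.1 (Sum.inl_injective hne)).1
  rw [(Sym2.mem_and_mem_iff hne).1 ⟨h, h'⟩] at he
  rcases p with _ | _ <;> rcases p' with _ | _ <;> simp_all [gadgetGraph]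

lemma xv_adj_yv (i : Fin (3 * n)) (x : Fin (2 * k)) (y : Fin (2 * k - 1)) :
    (gadgetGraph n k σ).Adj (xv i x) (yv i y) := by
  simp [gadgetGraph]

section CopyPart

variable (σ) in
def copyPart {t : ℕ} (f : Fin (3 * n) → Fin t) (j : Fin t) : Set (Sym2 (Vert n k)) :=
  {e ∈ (gadgetGraph n k σ).edgeSet | ∃ i x, xv i x ∈ e ∧ f i = j}

variable {t : ℕ} {f : Fin (3 * n) → Fin t}

lemma edgeDeg_copyPart_inl {i : Fin (3 * n)} {j : Fin t} (hij : f i = j)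
    (p : Fin (2 * k) ⊕ Fin (2 * k - 1)) :
    edgeDeg (copyPart σ f j) (Sum.inl (i, p)) =
      edgeDeg (gadgetGraph n k σ).edgeSet (Sum.inl (i, p)) := by
  unfold edgeDeg
  congr 1
  ext e
  refine ⟨fun ⟨⟨he, _⟩, hv⟩ => ⟨he, hv⟩, fun ⟨he, hv⟩ => ⟨⟨he, ?_⟩, hv⟩⟩
  obtain ⟨i', x, hx⟩ := exists_xv_mem he
  exact ⟨i', x, hx, eq_of_inl_mem he hv hx ▸ hij⟩

lemma edgeDeg_copyPart_hub (j : Fin t) (c : Fin 3) :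
    edgeDeg (copyPart σ f j) (hub c) = ∑ i with f i = j, #{x | σ i x = c} := by
  have : {w | s(hub c, w) ∈ copyPart σ f j}
      = {w | ∃ i x, (f i = j ∧ σ i x = c) ∧ w = xv i x} := by
    ext w
    constructor
    · rintro ⟨he, i, x, hx, hi⟩
      have hw : w ∈ {w | (gadgetGraph n k σ).Adj (hub c) w} := he
      obtain ⟨i', x', hc, rfl⟩ := neighborSet_hub (σ := σ) c ▸ hw
      obtain rfl := eq_of_inl_mem he hx (Sym2.mem_mk_right _ _)
      exact ⟨i, x', ⟨hi, hc⟩, rfl⟩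
    · rintro ⟨i, x, ⟨hi, hc⟩, rfl⟩
      have he : xv i x ∈ {w | (gadgetGraph n k σ).Adj (hub c) w} :=
        neighborSet_hub (σ := σ) c ▸ ⟨i, x, hc, rfl⟩
      exact ⟨he, i, x, Sym2.mem_mk_right _ _, hi⟩
  rw [edgeDeg_eq_ncard_setOf, this, ncard_setOf_xv, sum_filter]
  refine sum_congr rfl fun i _ => ?_
  split_ifs with hi <;> simp [hi]

lemma isRegularPartition_copyPart (hk : 1 ≤ k)
    (hhub : ∀ j c, edgeDeg (copyPart σ f j) (hub c) = 2 * k) :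
    IsRegularPartition (gadgetGraph n k σ) (copyPart σ f) := by
  refine ⟨fun j => ?_, fun j j' hjj' => ?_, ?_, fun j => ⟨2 * k, ?_⟩⟩
  · obtain ⟨e, he, -⟩ := edgeDeg_pos_iff.1 ((hhub j 0).symm ▸ (by omega : 0 < 2 * k))
    exact ⟨e, he⟩
  · refine Set.disjoint_left.2 fun e ⟨he, i, x, hx, hi⟩ ⟨_, i', x', hx', hi'⟩ => hjj' ?_
    rw [← hi, ← hi', eq_of_inl_mem he hx hx']
  · ext e
    simp only [Set.mem_iUnion]
    refine ⟨fun ⟨j, he⟩ => he.1, fun he => ?_⟩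
    obtain ⟨i, x, hx⟩ := exists_xv_mem he
    exact ⟨f i, he, i, x, hx, rfl⟩
  · rintro (⟨i, p⟩ | c) ⟨e, ⟨he, i', x, hx, hi'⟩, hv⟩
    · rw [edgeDeg_copyPart_inl (eq_of_inl_mem he hv hx ▸ hi') p, edgeDeg_inl hk]
    · exact hhub j c

/-- Every vertex of a copy has degree `2k`, so a `2k`-regular part reaching it takes all its
edges; as the copy is connected, it lies inside one part together with its edges to the hubs. -/
lemma exists_eq_copyPart (hk : 1 ≤ k) {P : Fin t → Set (Sym2 (Vert n k))}
    (hP : IsRegularPartition (gadgetGraph n k σ) P)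
    (hreg : ∀ j, IsRegularEdgeSet (P j) (2 * k)) :
    ∃ f : Fin (3 * n) → Fin t, P = copyPart σ f := by
  have hsat {j i p e} (hv : ∃ e ∈ P j, Sum.inl (i, p) ∈ e)
      (he : e ∈ (gadgetGraph n k σ).edgeSet) (hve : Sum.inl (i, p) ∈ e) : e ∈ P j :=
    (hreg j).mem_of_edgeDeg_eq (hP.subset_edgeSet j) hv (edgeDeg_inl hk i p) he hve
  let x₀ : Fin (2 * k) := ⟨0, by omega⟩
  let y₀ : Fin (2 * k - 1) := ⟨0, by omega⟩
  choose f hf using fun i => Set.mem_iUnion.1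
    (hP.2.2.1 ▸ xv_adj_yv (σ := σ) i x₀ y₀ : s(xv i x₀, yv i y₀) ∈ ⋃ j, P j)
  have hcopy {i x e} (he : e ∈ (gadgetGraph n k σ).edgeSet) (hx : xv i x ∈ e) :
      e ∈ P (f i) := by
    have hxy : s(xv i x, yv i y₀) ∈ P (f i) :=
      hsat ⟨_, hf i, Sym2.mem_mk_right _ _⟩ (xv_adj_yv (σ := σ) i x y₀)
        (Sym2.mem_mk_right _ _)
    exact hsat ⟨_, hxy, Sym2.mem_mk_left _ _⟩ he hx
  refine ⟨f, funext fun j => Set.ext fun e =>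
    ⟨fun he => ?_, fun ⟨he, i, x, hx, hi⟩ => hi ▸ hcopy he hx⟩⟩
  have he' := hP.subset_edgeSet j he
  obtain ⟨i, x, hx⟩ := exists_xv_mem he'
  refine ⟨he', i, x, hx, ?_⟩
  by_contra hne
  exact Set.disjoint_left.1 (hP.2.1 _ _ hne) (hcopy he' hx) he

end CopyPart

variable {a : Fin (3 * n) → ℕ}

theorem exists_threePartition_of_regNum_le (hk : 1 ≤ k) (hsum : ∑ i, a i = n * k)
    (hσ0 : ∀ i, #{x | σ i x = 0} = 2 * a i) (h : regNum (gadgetGraph n k σ) ≤ n) :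
    ∃ f : Fin (3 * n) → Fin n, ∀ j, ∑ i with f i = j, a i = k := by
  obtain ⟨t, htn, P, hP⟩ := exists_isRegularPartition_of_regNum_le h
  have hdeg : edgeDeg (gadgetGraph n k σ).edgeSet (hub 0) = n * (2 * k) := by
    rw [edgeDeg_hub]
    simp only [hσ0, ← mul_sum, hsum]
    ring
  have hlow : ∀ e ∈ (gadgetGraph n k σ).edgeSet,
      ∃ v ∈ e, edgeDeg (gadgetGraph n k σ).edgeSet v ≤ 2 * k := fun e he =>
    let ⟨i, x, hx⟩ := exists_xv_mem he
    ⟨_, hx, (edgeDeg_inl hk i _).le⟩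
  obtain ⟨rfl, hpart⟩ := hP.eq_of_edgeDeg_eq_mul htn (by omega)
    (hP.exists_isRegularEdgeSet_le hlow) hdeg
  obtain ⟨f, rfl⟩ := exists_eq_copyPart hk hP fun j => (hpart j).2
  refine ⟨f, fun j => ?_⟩
  have := (hpart j).1
  rw [edgeDeg_copyPart_hub] at this
  simp only [hσ0, ← mul_sum] at this
  omega

theorem regNum_le_of_threePartition (hk : 1 ≤ k) (ha : ∀ i, k < 4 * a i ∧ 2 * a i < k)
    (hσ0 : ∀ i, #{x | σ i x = 0} = 2 * a i) (hσ1 : ∀ i, #{x | σ i x = 1} = k - a i)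
    (hσ2 : ∀ i, #{x | σ i x = 2} = k - a i) {f : Fin (3 * n) → Fin n}
    (hf : ∀ j, ∑ i with f i = j, a i = k) :
    regNum (gadgetGraph n k σ) ≤ n := by
  refine (isRegularPartition_copyPart (f := f) hk fun j c => ?_).regNum_le
  have ha' : ∀ i ∈ ({i | f i = j} : Finset _), k < 4 * a i ∧ 2 * a i < k := fun i _ => ha i
  rw [edgeDeg_copyPart_hub]
  fin_cases c
  · simp only [Fin.zero_eta, hσ0, ← mul_sum, hf j]
  · simp only [Fin.mk_one, hσ1, sum_sub_eq_two_mul hk ha' (hf j)]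
  · simp only [Fin.reduceFinMk, hσ2, sum_sub_eq_two_mul hk ha' (hf j)]

end Gadget

theorem regNum_gadget_iff_threePartition_general (n k : ℕ) (hk : 1 ≤ k)
    (a : Fin (3 * n) → ℕ)
    (ha : ∀ i, k < 4 * a i ∧ 2 * a i < k)
    (hsum : ∑ i, a i = n * k)
    (σ : Fin (3 * n) → Fin (2 * k) → Fin 3)
    (hσ0 : ∀ i, (Finset.univ.filter fun x => σ i x = 0).card = 2 * a i)
    (hσ1 : ∀ i, (Finset.univ.filter fun x => σ i x = 1).card = k - a i)
    (hσ2 : ∀ i, (Finset.univ.filter fun x => σ i x = 2).card = k - a i) :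
    regNum (gadgetGraph n k σ) ≤ n ↔
      ∃ f : Fin (3 * n) → Fin n,
        ∀ j : Fin n, ∑ i ∈ Finset.univ.filter fun i => f i = j, a i = k :=
  ⟨Gadget.exists_threePartition_of_regNum_le hk hsum hσ0,
    fun ⟨_, hf⟩ => Gadget.regNum_le_of_threePartition hk ha hσ0 hσ1 hσ2 hf⟩

/-- `reg(G_{A,k}) ≤ n` iff the numbers `a₁, …, a_{3n}` can be partitioned
into `n` groups each summing to `k`. -/
theorem regNum_gadget_iff_threePartition (n k : ℕ) (hn : 1 ≤ n) (hk : 1 ≤ k)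
    (a : Fin (3 * n) → ℕ)
    (ha : ∀ i, k < 4 * a i ∧ 2 * a i < k)
    (hsum : ∑ i, a i = n * k)
    (σ : Fin (3 * n) → Fin (2 * k) → Fin 3)
    (hσ0 : ∀ i, (Finset.univ.filter fun x => σ i x = 0).card = 2 * a i)
    (hσ1 : ∀ i, (Finset.univ.filter fun x => σ i x = 1).card = k - a i)
    (hσ2 : ∀ i, (Finset.univ.filter fun x => σ i x = 2).card = k - a i) :
    regNum (gadgetGraph n k σ) ≤ n ↔
      ∃ f : Fin (3 * n) → Fin n,
        ∀ j : Fin n, ∑ i ∈ Finset.univ.filter fun i => f i = j, a i = k :=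
  regNum_gadget_iff_threePartition_general n k hk a ha hsum σ hσ0 hσ1 hσ2
end

section
/- For every integer n ≥ 1 there exists a finite simple graph G such that the set of vertex degrees of G is exactly {0, 1, 2, …, 2^n − 1} (in particular Δ(G) = 2^n − 1) and reg(G) = n. -/
open SimpleGraph

variable {V : Type*}

/-! If the edge set of `G` is split into `t` parts, the `i`-th one `rᵢ`-regular, then every degree of
`G` is a sum `∑_{i ∈ S} rᵢ` over the parts `S` met at that vertex, so `G` has at most `2 ^ t`
distinct degrees; degrees `0, …, 2 ^ n - 1` therefore force `reg G ≥ n`. Conversely, in the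
Cartesian product over `i < n` of `K_{2^i+1}` with an extra isolated vertex, the edges running in
direction `i` form a `2 ^ i`-regular subgraph, and a vertex has degree `∑ 2 ^ i` over the
directions in which it avoids the isolated vertex; by binary expansion these are all of
`0, …, 2 ^ n - 1`. -/

open Finset Function

section EdgeDeg

variable {V : Type*}

lemma edgeDeg_edgeSet_eq_ncard (G : SimpleGraph V) (v : V) :
    edgeDeg G.edgeSet v = (G.neighborSet v).ncard := by
  classical
  exact Nat.card_congr (G.incidenceSetEquivNeighborSet v)

lemma edgeDeg_edgeSet (G : SimpleGraph V) (v : V) [Fintype (G.neighborSet v)] :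
    edgeDeg G.edgeSet v = G.degree v := by
  rw [edgeDeg_edgeSet_eq_ncard, ← card_neighborSet_eq_degree, Set.ncard_eq_toFinset_card',
    Set.toFinset_card]

lemma edgeDeg_iUnion_s16 [Finite V] {ι : Type*} [Fintype ι] {A : ι → Set (Sym2 V)}
    (hA : Pairwise (Disjoint on A)) (v : V) :
    edgeDeg (⋃ i, A i) v = ∑ i, edgeDeg (A i) v := by
  have hsplit : {e ∈ ⋃ i, A i | v ∈ e} = ⋃ i, {e ∈ A i | v ∈ e} := by
    ext e
    simp
  rw [edgeDeg, hsplit, Set.ncard_iUnion_of_finite (fun _ => Set.toFinite _)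
    (fun i j hij => (hA hij).mono (fun _ h => h.1) (fun _ h => h.1)), finsum_eq_sum_of_fintype]
  rfl

lemma IsRegularEdgeSet.edgeDeg_eq {F : Set (Sym2 V)} {r : ℕ} (hF : IsRegularEdgeSet F r) {v : V}
    (hv : edgeDeg F v ≠ 0) : edgeDeg F v = r :=
  hF v (Set.nonempty_of_ncard_ne_zero hv)

lemma isRegularEdgeSet_edgeSet {G : SimpleGraph V} {r : ℕ}
    (h : ∀ v w, G.Adj v w → (G.neighborSet v).ncard = r) : IsRegularEdgeSet G.edgeSet r := by
  rintro v ⟨e, he, hve⟩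
  obtain ⟨w, rfl⟩ := Sym2.mem_iff_exists.mp hve
  rw [edgeDeg_edgeSet_eq_ncard]
  exact h v w he

end EdgeDeg

section RegularPartition

variable {V : Type*} [Fintype V] {G : SimpleGraph V} [DecidableRel G.Adj]

lemma IsRegularPartition.ncard_degrees_le {t : ℕ} {P : Fin t → Set (Sym2 V)}
    (hP : IsRegularPartition G P) : {d | ∃ x, G.degree x = d}.ncard ≤ 2 ^ t := by
  obtain ⟨-, hdisj, hunion, hreg⟩ := hP
  choose r hr using hreg
  have hsub : {d | ∃ x, G.degree x = d} ⊆ Set.range fun S : Finset (Fin t) => ∑ i ∈ S, r i := by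
    rintro _ ⟨x, rfl⟩
    refine ⟨univ.filter fun i => edgeDeg (P i) x ≠ 0, ?_⟩
    rw [← edgeDeg_edgeSet, ← hunion, edgeDeg_iUnion_s16 (fun i j => hdisj i j), ← sum_filter_ne_zero]
    exact sum_congr rfl fun i hi => (IsRegularEdgeSet.edgeDeg_eq (hr i) (mem_filter.mp hi).2).symm
  calc {d | ∃ x, G.degree x = d}.ncard
      ≤ Nat.card (Set.range fun S : Finset (Fin t) => ∑ i ∈ S, r i) := Set.ncard_le_ncard hsub
    _ ≤ Nat.card (Finset (Fin t)) := Finite.card_range_le _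
    _ = 2 ^ t := by simp

lemma regNum_eq_of_isRegularPartition {t : ℕ} {P : Fin t → Set (Sym2 V)}
    (hP : IsRegularPartition G P) (h : 2 ^ t ≤ {d | ∃ x, G.degree x = d}.ncard) :
    regNum G = t :=
  le_antisymm (Nat.sInf_le ⟨P, hP⟩) <| le_csInf ⟨t, P, hP⟩ fun _ ⟨_, hQ⟩ =>
    (Nat.pow_le_pow_iff_right one_lt_two).mp (h.trans (IsRegularPartition.ncard_degrees_le hQ))

end RegularPartition

namespace SimpleGraph

lemma maxDegree_eq_of_degrees_eq_Iic {V : Type*} [Fintype V] {G : SimpleGraph V}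
    [DecidableRel G.Adj] {k : ℕ} (h : {d | ∃ x, G.degree x = d} = Set.Iic k) :
    G.maxDegree = k := by
  refine le_antisymm (G.maxDegree_le_of_forall_degree_le k fun x => ?_) ?_
  · exact Set.mem_Iic.mp (h ▸ ⟨x, rfl⟩ : G.degree x ∈ Set.Iic k)
  · obtain ⟨x, hx⟩ : k ∈ {d | ∃ x, G.degree x = d} := h ▸ Set.self_mem_Iic
    exact hx ▸ G.degree_le_maxDegree x

section piBoxProd

variable {ι : Type*} {α : ι → Type*}

def piBoxProdDir (H : ∀ i, SimpleGraph (α i)) (i : ι) : SimpleGraph (∀ j, α j) where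
  Adj f g := (H i).Adj (f i) (g i) ∧ ∀ j ≠ i, f j = g j
  symm := ⟨fun _ _ h => ⟨h.1.symm, fun j hj => (h.2 j hj).symm⟩⟩
  loopless := ⟨fun _ h => h.1.ne rfl⟩

def piBoxProd (H : ∀ i, SimpleGraph (α i)) : SimpleGraph (∀ j, α j) := ⨆ i, piBoxProdDir H i

variable (H : ∀ i, SimpleGraph (α i))

lemma pairwise_disjoint_edgeSet_piBoxProdDir :
    Pairwise (Disjoint on fun i => (piBoxProdDir H i).edgeSet) := by
  intro i j hij
  rw [onFun_apply, disjoint_edgeSet, SimpleGraph.disjoint_left]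
  exact fun f g hi hj => hi.1.ne (hj.2 i hij)

variable [DecidableEq ι]

lemma neighborSet_piBoxProdDir (i : ι) (f : ∀ i, α i) :
    (piBoxProdDir H i).neighborSet f = update f i '' (H i).neighborSet (f i) := by
  ext g
  constructor
  · rintro ⟨hadj, heq⟩
    refine ⟨g i, hadj, funext fun j => ?_⟩
    rcases eq_or_ne j i with rfl | hj
    · exact update_self _ _ _
    · rw [update_of_ne hj, heq j hj]
  · rintro ⟨b, hb, rfl⟩
    exact ⟨by rwa [update_self], fun j hj => (update_of_ne hj _ _).symm⟩

lemma ncard_neighborSet_piBoxProdDir (i : ι) (f : ∀ i, α i) :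
    ((piBoxProdDir H i).neighborSet f).ncard = ((H i).neighborSet (f i)).ncard := by
  rw [neighborSet_piBoxProdDir, Set.ncard_image_of_injective _ (update_injective f i)]

lemma edgeDeg_piBoxProd [Fintype ι] [Finite (∀ i, α i)] (f : ∀ i, α i) :
    edgeDeg (piBoxProd H).edgeSet f = ∑ i, ((H i).neighborSet (f i)).ncard := by
  rw [piBoxProd, edgeSet_iSup, edgeDeg_iUnion_s16 (pairwise_disjoint_edgeSet_piBoxProdDir H)]
  simp only [edgeDeg_edgeSet_eq_ncard, ncard_neighborSet_piBoxProdDir]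

lemma isRegularEdgeSet_piBoxProdDir {i : ι} {r : ℕ}
    (h : ∀ a b, (H i).Adj a b → ((H i).neighborSet a).ncard = r) :
    IsRegularEdgeSet (piBoxProdDir H i).edgeSet r :=
  isRegularEdgeSet_edgeSet fun f g hfg => by
    rw [ncard_neighborSet_piBoxProdDir]
    exact h _ _ hfg.1

lemma edgeSet_piBoxProdDir_nonempty (hH : ∀ i, ∃ a b, (H i).Adj a b) (i : ι) :
    (piBoxProdDir H i).edgeSet.Nonempty := by
  choose a b hab using hH
  refine ⟨s(a, update a i (b i)), ?_, fun j hj => (update_of_ne hj _ _).symm⟩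
  simpa using hab i

end piBoxProd

lemma isRegularPartition_piBoxProdDir {n : ℕ} {α : Fin n → Type*} (H : ∀ i, SimpleGraph (α i))
    (hH : ∀ i, ∃ a b, (H i).Adj a b) (r : Fin n → ℕ)
    (hr : ∀ i a b, (H i).Adj a b → ((H i).neighborSet a).ncard = r i) :
    IsRegularPartition (piBoxProd H) fun i => (piBoxProdDir H i).edgeSet :=
  ⟨edgeSet_piBoxProdDir_nonempty H hH, fun _ _ hij => pairwise_disjoint_edgeSet_piBoxProdDir H hij,
    edgeSet_iSup.symm, fun i => ⟨r i, isRegularEdgeSet_piBoxProdDir H (hr i)⟩⟩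

lemma ncard_neighborSet_map_some_top_some {α : Type*} [Finite α] (x : α) :
    (((⊤ : SimpleGraph α).map Embedding.some).neighborSet (some x)).ncard = Nat.card α - 1 := by
  rw [← Embedding.some_apply, neighborSet_map,
    Set.ncard_image_of_injective _ (Embedding.injective _), neighborSet_top,
    Set.ncard_compl, Set.ncard_singleton]

lemma neighborSet_map_some_top_none {α : Type*} :
    ((⊤ : SimpleGraph α).map Embedding.some).neighborSet none = ∅ :=
  Set.eq_empty_iff_forall_notMem.mpr fun _ ⟨_, _, _, _, h, _⟩ => Option.some_ne_none _ h

end SimpleGraph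

lemma range_sum_two_pow_eq_Iic (n : ℕ) :
    Set.range (fun S : Finset (Fin n) => ∑ i ∈ S, 2 ^ (i : ℕ)) = Set.Iic (2 ^ n - 1) := by
  ext d
  simp only [Set.mem_range, Set.mem_Iic]
  constructor
  · rintro ⟨S, rfl⟩
    have := Nat.geomSum_lt le_rfl (s := S.map Fin.valEmbedding) (n := n) (by simp)
    rw [sum_map] at this
    exact Nat.le_sub_one_of_lt this
  · intro hd
    have hbits : (univ.filter fun i : Fin n => (i : ℕ) ∈ d.bitIndices).map Fin.valEmbedding =
        d.bitIndices.toFinset := by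
      ext k
      simp only [mem_map, mem_filter, mem_univ, true_and, Fin.valEmbedding_apply,
        List.mem_toFinset]
      refine ⟨fun ⟨i, hi, hik⟩ => hik ▸ hi, fun hk => ⟨⟨k, ?_⟩, hk, rfl⟩⟩
      have := Nat.two_pow_le_of_mem_bitIndices hk
      have := Nat.one_le_two_pow (n := n)
      exact (Nat.pow_lt_pow_iff_right one_lt_two).mp (by omega)
    have hsum := sum_map (univ.filter fun i : Fin n => (i : ℕ) ∈ d.bitIndices) Fin.valEmbedding
      (2 ^ ·)
    rw [hbits, sum_toFinset_bitIndices_two_pow] at hsum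
    exact ⟨_, hsum.symm⟩

def cliqueFactor (m : ℕ) : SimpleGraph (Option (Fin (m + 1))) :=
  (⊤ : SimpleGraph (Fin (m + 1))).map Embedding.some

lemma cliqueFactor_adj_zero_last (m : ℕ) (hm : m ≠ 0) :
    (cliqueFactor m).Adj (some 0) (some (Fin.last m)) := by
  rw [cliqueFactor, ← Embedding.some_apply, SimpleGraph.map_adj_apply, SimpleGraph.top_adj]
  simpa [Fin.ext_iff] using hm.symm

lemma ncard_neighborSet_cliqueFactor (m : ℕ) (a : Option (Fin (m + 1))) :
    ((cliqueFactor m).neighborSet a).ncard = if a.isSome then m else 0 := by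
  cases a with
  | none => rw [cliqueFactor, SimpleGraph.neighborSet_map_some_top_none, Set.ncard_empty]; rfl
  | some x => rw [cliqueFactor, SimpleGraph.ncard_neighborSet_map_some_top_some]; simp

lemma isSome_of_cliqueFactor_adj {m : ℕ} {a b : Option (Fin (m + 1))}
    (h : (cliqueFactor m).Adj a b) : a.isSome := by
  obtain ⟨_, x, _, _, rfl, _⟩ := h
  rfl

def cliqueBoxProd (n : ℕ) : SimpleGraph (∀ i : Fin n, Option (Fin (2 ^ (i : ℕ) + 1))) :=
  SimpleGraph.piBoxProd fun i => cliqueFactor (2 ^ (i : ℕ))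

section cliqueBoxProd

variable (n : ℕ)

lemma degree_cliqueBoxProd [DecidableRel (cliqueBoxProd n).Adj]
    (f : ∀ i : Fin n, Option (Fin (2 ^ (i : ℕ) + 1))) :
    (cliqueBoxProd n).degree f = ∑ i with (f i).isSome, 2 ^ (i : ℕ) := by
  rw [← edgeDeg_edgeSet, cliqueBoxProd, SimpleGraph.edgeDeg_piBoxProd, sum_filter]
  exact sum_congr rfl fun i _ => ncard_neighborSet_cliqueFactor _ (f i)

lemma degrees_cliqueBoxProd [DecidableRel (cliqueBoxProd n).Adj] :
    {d | ∃ f, (cliqueBoxProd n).degree f = d} = Set.Iic (2 ^ n - 1) := by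
  rw [← range_sum_two_pow_eq_Iic]
  refine Set.ext fun d => ⟨fun ⟨f, hf⟩ => ⟨_, (degree_cliqueBoxProd n f).symm.trans hf⟩, ?_⟩
  rintro ⟨S, rfl⟩
  refine ⟨fun i => if i ∈ S then some 0 else none, ?_⟩
  rw [degree_cliqueBoxProd]
  congr
  ext i
  by_cases hi : i ∈ S <;> simp [hi]

lemma isRegularPartition_cliqueBoxProd :
    IsRegularPartition (cliqueBoxProd n)
      fun i => (SimpleGraph.piBoxProdDir (fun i : Fin n => cliqueFactor (2 ^ (i : ℕ))) i).edgeSet :=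
  SimpleGraph.isRegularPartition_piBoxProdDir _
    (fun i => ⟨_, _, cliqueFactor_adj_zero_last _ (pow_ne_zero _ two_ne_zero)⟩)
    (fun i => 2 ^ (i : ℕ)) fun i _ _ hab => by
      rw [ncard_neighborSet_cliqueFactor, if_pos (isSome_of_cliqueFactor_adj hab)]

end cliqueBoxProd

theorem exists_graph_degrees_Iic_and_regNum_general (n : ℕ) :
    ∃ (W : Type) (_ : Fintype W) (G : SimpleGraph W) (_ : DecidableRel G.Adj),
      {d : ℕ | ∃ x : W, G.degree x = d} = Set.Iic (2 ^ n - 1) ∧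
        G.maxDegree = 2 ^ n - 1 ∧ regNum G = n := by
  classical
  have hdeg := degrees_cliqueBoxProd n
  refine ⟨_, inferInstance, cliqueBoxProd n, inferInstance, hdeg,
    maxDegree_eq_of_degrees_eq_Iic hdeg,
    regNum_eq_of_isRegularPartition (isRegularPartition_cliqueBoxProd n) ?_⟩
  rw [hdeg, ← coe_Iic, Set.ncard_coe_finset, Nat.card_Iic, Nat.sub_add_cancel Nat.one_le_two_pow]

/-- for every `n ≥ 1` there is a finite simple graph whose set of vertex
degrees is exactly `{0, 1, …, 2^n - 1}` (in particular `Δ(G) = 2^n - 1`) and whose regular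
number is `n`. -/
theorem exists_graph_degrees_Iic_and_regNum (n : ℕ) (hn : 1 ≤ n) :
    ∃ (W : Type) (_ : Fintype W) (G : SimpleGraph W) (_ : DecidableRel G.Adj),
      {d : ℕ | ∃ x : W, G.degree x = d} = Set.Iic (2 ^ n - 1) ∧
        G.maxDegree = 2 ^ n - 1 ∧ regNum G = n :=
  exists_graph_degrees_Iic_and_regNum_general n
end
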